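/- arXiv:1204.5371 — 5 statements merged into one kernel-verified Lean document; each statement's English description precedes it below -/
import Mathlib

section
/- Any cellular automaton (sliding block code) F : Σ^ℤ → Σ^ℤ with radius r is Lipschitz with constant 2r+1 with respect to the Besicovitch pseudometric: d_B(F(x), F(y)) ≤ (2r+1)·d_B(x,y). -/
open Filter

/-- Hamming distance between `x` and `y` on the coordinate interval `[a, b]`. -/
noncomputable def hamIcc {A : Type*} (x y : ℤ → A) (a b : ℤ) : ℕ :=
  @Finset.card ℤ (@Finset.filter ℤ (fun i => x i ≠ y i) (Classical.decPred _) (Finset.Icc a b))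

/-- The Besicovitch pseudodistance on `A^ℤ`. -/
noncomputable def dB {A : Type*} (x y : ℤ → A) : ℝ :=
  atTop.limsup fun n : ℕ => (hamIcc x y (-(n : ℤ)) n : ℝ) / (2 * n + 1)

/-- The Weyl pseudodistance on `A^ℤ`. -/
noncomputable def dW {A : Type*} (x y : ℤ → A) : ℝ :=
  atTop.limsup fun n : ℕ => ⨆ m : ℤ, (hamIcc x y (m - n) (m + n) : ℝ) / (2 * n + 1)

/-- The shift map. -/
def shiftMap {A : Type*} (x : ℤ → A) : ℤ → A := fun i => x (i + 1)

/-- A subshift: a shift-invariant subset of `A^ℤ` closed in the Cantor topology. -/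
def IsSubshift {A : Type*} (X : Set (ℤ → A)) : Prop :=
  (∀ x ∈ X, shiftMap x ∈ X) ∧ (∀ x ∈ X, (fun i => x (i - 1)) ∈ X) ∧
  (∀ x : ℤ → A, (∀ n : ℕ, ∃ y ∈ X, ∀ i : ℤ, |i| ≤ (n : ℤ) → y i = x i) → x ∈ X)

/-- The word `w` occurs in (some point of) `X`. -/
def occursIn {A : Type*} (X : Set (ℤ → A)) {k : ℕ} (w : Fin k → A) : Prop :=
  ∃ x ∈ X, ∃ i : ℤ, ∀ j : Fin k, x (i + j) = w j

/-- A shift of finite type: defined by a clopen window condition. -/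
def IsSFT {A : Type*} (X : Set (ℤ → A)) : Prop :=
  ∃ (k : ℕ) (P : (Fin k → A) → Prop), X = {x | ∀ i : ℤ, P (fun j => x (i + j))}

/-- A sliding block code (cellular automaton when `A = B`) of some radius `r`. -/
def IsSlidingBlock {A B : Type*} (φ : (ℤ → A) → (ℤ → B)) : Prop :=
  ∃ (r : ℕ) (f : (Fin (2 * r + 1) → A) → B), ∀ x i, φ x i = f fun j => x (i - r + j)

/-- A sofic shift: the image of an SFT under a sliding block code. -/
def IsSofic {A : Type*} (X : Set (ℤ → A)) : Prop :=
  ∃ (B : Type) (_ : Fintype B) (Y : Set (ℤ → B)) (φ : (ℤ → B) → (ℤ → A)),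
    IsSFT Y ∧ IsSlidingBlock φ ∧ X = φ '' Y

/-- Topological mixing for shift spaces, in terms of words of the language. -/
def IsMixingShift {A : Type*} (X : Set (ℤ → A)) : Prop :=
  ∀ (k l : ℕ) (u : Fin k → A) (v : Fin l → A), occursIn X u → occursIn X v →
    ∃ N : ℕ, ∀ n ≥ N, ∃ x ∈ X, ∃ i : ℤ,
      (∀ j : Fin k, x (i + j) = u j) ∧ (∀ j : Fin l, x (i + k + n + j) = v j)

/-- Topological entropy of a shift space. -/
noncomputable def shiftEntropy {A : Type*} (X : Set (ℤ → A)) : ℝ :=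
  atTop.limsup fun n : ℕ => Real.log (Set.ncard {w : Fin n → A | occursIn X w}) / n

/-- The periodic configuration `∞w∞` with period word `w`. -/
def perPt {A : Type*} {n : ℕ} (hn : 0 < n) (w : Fin n → A) : ℤ → A := fun i =>
  w ⟨(i % (n : ℤ)).toNat, by
    have h1 : (0 : ℤ) < (n : ℤ) := by exact_mod_cast hn
    have h2 := Int.emod_nonneg i (by omega : (n : ℤ) ≠ 0)
    have h3 := Int.emod_lt_of_pos i h1
    omega⟩

/-- The density coding `U' : [0,1] → {0,1}^ℕ`: the dyadic interval of `ℕ` containing `n`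
has left endpoint `2^(Nat.log 2 (n+1)) - 1` and length `L = 2^(Nat.log 2 (n+1))`; it is
filled with `⌊x·L⌋` zeros (`false`) followed by ones (`true`). -/
noncomputable def Uprime (x : ℝ) (n : ℕ) : Bool :=
  decide (⌊x * 2 ^ Nat.log 2 (n + 1)⌋ ≤ ((n : ℤ) + 1 - 2 ^ Nat.log 2 (n + 1)))

/-- The two-sided version `T'(x) = U'(x)^R.U'(x)`. -/
noncomputable def Tprime (x : ℝ) : ℤ → Bool := fun i =>
  if 0 ≤ i then Uprime x i.toNat else Uprime x (-i - 1).toNat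

/-- The one-sided Besicovitch pseudodistance. -/
noncomputable def dB1 {A : Type*} (u v : ℕ → A) : ℝ :=
  atTop.limsup fun n : ℕ =>
    ((@Finset.filter ℕ (fun i => u i ≠ v i) (Classical.decPred _) (Finset.range n)).card : ℝ) / n

/-!
A cell where `F x` and `F y` differ sees, within distance `r`, a cell where `x` and `y` differ,
so every difference of `x, y` in `[-(n+r), n+r]` accounts for at most `2r+1` differences of
`F x, F y` in `[-n, n]`. Dividing by `2n+1` instead of `2(n+r)+1` costs at most `2r/(2n+1)`,
which vanishes in the limsup.
-/

open Filter Topology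

theorem Filter.limsup_le_mul_limsup_of_le_mul_add {ι : Type*} {l : Filter ι} [l.NeBot]
    {u v w : ι → ℝ} {c : ℝ} (hc : 0 ≤ c) (hu : l.IsCoboundedUnder (· ≤ ·) u)
    (hv_le : l.IsBoundedUnder (· ≤ ·) v) (hv_ge : l.IsBoundedUnder (· ≥ ·) v)
    (hw : Tendsto w l (𝓝 0)) (h : ∀ᶠ i in l, u i ≤ c * (v i + w i)) :
    l.limsup u ≤ c * l.limsup v := by
  have hvw_le : l.IsBoundedUnder (· ≤ ·) (v + w) :=
    isBoundedUnder_le_add hv_le hw.isBoundedUnder_le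
  have hvw_co : l.IsCoboundedUnder (· ≤ ·) (v + w) :=
    isCoboundedUnder_le_add hv_ge hw.isCoboundedUnder_le
  calc l.limsup u ≤ l.limsup ((c * ·) ∘ (v + w)) :=
        limsup_le_limsup h hu ((monotone_mul_left_of_nonneg hc).isBoundedUnder_le_comp hvw_le)
    _ = c * l.limsup (v + w) :=
        ((monotone_mul_left_of_nonneg hc).map_limsup_of_continuousAt _
          (continuous_const_mul c).continuousAt hvw_le hvw_co).symm
    _ ≤ c * (l.limsup v + l.limsup w) :=
        mul_le_mul_of_nonneg_left
          (limsup_add_le hv_ge hv_le hw.isCoboundedUnder_le hw.isBoundedUnder_le) hc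
    _ = c * l.limsup v := by rw [hw.limsup_eq, add_zero]

theorem div_le_div_add_add_div {H m s : ℝ} (hm : 0 < m) (hs : 0 ≤ s) (hH : H ≤ m + s) :
    H / m ≤ H / (m + s) + s / m := by
  rw [div_add_div _ _ (by positivity) hm.ne', div_le_div_iff₀ hm (by positivity)]
  nlinarith [mul_le_mul_of_nonneg_left hH (mul_nonneg hs hm.le)]

section Hamming

variable {A : Type*}

theorem hamIcc_eq_card_filter [DecidableEq A] (x y : ℤ → A) (a b : ℤ) :
    hamIcc x y a b = ((Finset.Icc a b).filter fun i => x i ≠ y i).card := by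
  unfold hamIcc
  congr

theorem hamIcc_le_toNat (x y : ℤ → A) (a b : ℤ) : hamIcc x y a b ≤ (b + 1 - a).toNat := by
  classical
  rw [hamIcc_eq_card_filter, ← Int.card_Icc]
  exact Finset.card_filter_le _ _

theorem hamIcc_map_le {B : Type*} {r : ℕ} {f : (Fin (2 * r + 1) → A) → B}
    {F : (ℤ → A) → ℤ → B} (hF : ∀ x i, F x i = f fun j => x (i - r + j)) (x y : ℤ → A)
    (a b : ℤ) : hamIcc (F x) (F y) a b ≤ (2 * r + 1) * hamIcc x y (a - r) (b + r) := by
  classical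
  simp only [hamIcc_eq_card_filter]
  set D := (Finset.Icc (a - r) (b + r)).filter fun k => x k ≠ y k
  have hcover : ((Finset.Icc a b).filter fun i => F x i ≠ F y i) ⊆
      D.biUnion fun k => Finset.Icc (k - r) (k + r) := by
    intro i hi
    simp only [Finset.mem_filter, Finset.mem_Icc] at hi
    obtain ⟨⟨hai, hib⟩, hne⟩ := hi
    obtain ⟨j, hj⟩ : ∃ j : Fin (2 * r + 1), x (i - r + j) ≠ y (i - r + j) := by
      by_contra! h
      exact hne (by simp only [hF, h])
    have hjr := j.isLt
    simp only [D, Finset.mem_biUnion, Finset.mem_filter, Finset.mem_Icc]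
    exact ⟨i - r + j, ⟨⟨by omega, by omega⟩, hj⟩, by omega, by omega⟩
  calc _ ≤ (D.biUnion fun k => Finset.Icc (k - r) (k + r)).card := Finset.card_le_card hcover
    _ ≤ D.card * (2 * r + 1) :=
        Finset.card_biUnion_le_card_mul _ _ _ fun k _ => by rw [Int.card_Icc]; omega
    _ = _ := mul_comm _ _

noncomputable def hamDensity (x y : ℤ → A) (n : ℕ) : ℝ :=
  (hamIcc x y (-(n : ℤ)) n : ℝ) / (2 * n + 1)

theorem dB_eq_limsup_hamDensity (x y : ℤ → A) : dB x y = atTop.limsup (hamDensity x y) := rfl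

theorem hamIcc_neg_self_le (x y : ℤ → A) (n : ℕ) : (hamIcc x y (-(n : ℤ)) n : ℝ) ≤ 2 * n + 1 := by
  have h := hamIcc_le_toNat x y (-(n : ℤ)) n
  rw [show ((n : ℤ) + 1 - -(n : ℤ)).toNat = 2 * n + 1 by omega] at h
  exact_mod_cast h

theorem hamDensity_nonneg (x y : ℤ → A) (n : ℕ) : 0 ≤ hamDensity x y n := by
  unfold hamDensity
  positivity

theorem hamDensity_le_one (x y : ℤ → A) (n : ℕ) : hamDensity x y n ≤ 1 :=
  div_le_one_of_le₀ (hamIcc_neg_self_le x y n) (by positivity)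

theorem hamDensity_map_le {B : Type*} {r : ℕ} {f : (Fin (2 * r + 1) → A) → B}
    {F : (ℤ → A) → ℤ → B} (hF : ∀ x i, F x i = f fun j => x (i - r + j)) (x y : ℤ → A)
    (n : ℕ) : hamDensity (F x) (F y) n ≤
      (2 * r + 1) * (hamDensity x y (n + r) + 2 * r / (2 * n + 1)) := by
  have hcount : (hamIcc (F x) (F y) (-(n : ℤ)) n : ℝ) ≤
      (2 * r + 1) * hamIcc x y (-((n : ℤ) + r)) ((n : ℤ) + r) := by
    have h := hamIcc_map_le hF x y (-(n : ℤ)) n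
    rw [show -(n : ℤ) - r = -((n : ℤ) + r) by ring] at h
    exact_mod_cast h
  have hH := hamIcc_neg_self_le x y (n + r)
  simp only [hamDensity]
  push_cast at hH ⊢
  calc _ ≤ (2 * r + 1) * ((hamIcc x y (-((n : ℤ) + r)) ((n : ℤ) + r) : ℝ) / (2 * n + 1)) := by
        rw [mul_div_assoc']
        gcongr
    _ ≤ (2 * r + 1) * ((hamIcc x y (-((n : ℤ) + r)) ((n : ℤ) + r) : ℝ) / (2 * n + 1 + 2 * r)
          + 2 * r / (2 * n + 1)) := by
        gcongr
        exact div_le_div_add_add_div (by positivity) (by positivity) (by linarith)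
    _ = _ := by ring

end Hamming

theorem ca_lipschitz_dB_general {A : Type*} (r : ℕ)
    (f : (Fin (2 * r + 1) → A) → A) (F : (ℤ → A) → (ℤ → A))
    (hF : ∀ x i, F x i = f fun j => x (i - r + j)) :
    ∀ x y : ℤ → A, dB (F x) (F y) ≤ (2 * r + 1) * dB x y := by
  intro x y
  have hvanish : Tendsto (fun n : ℕ => 2 * (r : ℝ) / (2 * n + 1)) atTop (𝓝 0) :=
    tendsto_const_nhds.div_atTop <| tendsto_atTop_add_const_right _ _ <|
      (tendsto_natCast_atTop_atTop (R := ℝ)).const_mul_atTop two_pos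
  rw [dB_eq_limsup_hamDensity, dB_eq_limsup_hamDensity, ← limsup_nat_add (hamDensity x y) r]
  exact limsup_le_mul_limsup_of_le_mul_add (by positivity)
    (isCoboundedUnder_le_of_le atTop (hamDensity_nonneg _ _))
    (isBoundedUnder_of ⟨1, fun n => hamDensity_le_one x y (n + r)⟩)
    (isBoundedUnder_of ⟨0, fun n => hamDensity_nonneg x y (n + r)⟩)
    hvanish (Eventually.of_forall (hamDensity_map_le hF x y))

/-- a cellular automaton of radius `r` is `(2r+1)`-Lipschitz for `dB`. -/
theorem ca_lipschitz_dB {A : Type*} [Fintype A] (r : ℕ)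
    (f : (Fin (2 * r + 1) → A) → A) (F : (ℤ → A) → (ℤ → A))
    (hF : ∀ x i, F x i = f fun j => x (i - r + j)) :
    ∀ x y : ℤ → A, dB (F x) (F y) ≤ (2 * r + 1) * dB x y :=
  ca_lipschitz_dB_general r f F hF
end

section
/- The map T' : [0,1] → {0,1}^ℤ defined via U' is continuous with respect to the Besicovitch pseudometric, where U'(x) is obtained by partitioning ℕ into intervals [2^{n-1}−1, 2^n−1) for n>0 and filling each such interval [a,b) with 0^{⌊x(b−a)⌋} 1^{⌈(1−x)(b−a)⌉}, and T'(x) = U'(x)^R.U'(x) (the reversal of U'(x) on negative coordinates, U'(x) on nonnegative coordinates). In particular, {0,1}^ℤ with the Besicovitch pseudometric is path-connected from ∞0∞ to ∞1∞. -/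
open Filter

/-! On the dyadic block `[2^k - 1, 2^(k+1) - 1)` the words `U'(x)` and `U'(y)` differ on at most
`|⌊x 2^k⌋ - ⌊y 2^k⌋| ≤ |x - y| 2^k + 1` positions. Summing over the `log₂ N + 1` blocks that meet
`[0, N)` gives at most `2 |x - y| N + log₂ N + 1` differences, so the one-sided Besicovitch distance
of `U'(x)` and `U'(y)` is at most `2 |x - y|`. Mirroring does not increase the distance, since the
window `[-n, n]` of `u^R.u` consists of the prefixes of `u` of lengths `n + 1` and `n`. Hence
`d_B(T'(x), T'(y)) ≤ 2 |x - y|`. -/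

open Finset Topology

def mirror {A : Type*} (u : ℕ → A) : ℤ → A := fun i =>
  if 0 ≤ i then u i.toNat else u (-i - 1).toNat

lemma mirror_of_nonneg {A : Type*} (u : ℕ → A) {i : ℤ} (hi : 0 ≤ i) : mirror u i = u i.toNat :=
  if_pos hi

lemma mirror_of_neg {A : Type*} (u : ℕ → A) {i : ℤ} (hi : i < 0) : mirror u i = u (-i - 1).toNat :=
  if_neg hi.not_ge

lemma Tprime_eq_mirror (x : ℝ) : Tprime x = mirror (Uprime x) := rfl

lemma mirror_const {A : Type*} (a : A) : mirror (fun _ => a) = fun _ => a := by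
  funext i
  simp [mirror]

lemma Uprime_zero : Uprime 0 = fun _ => true := by
  funext m
  have : (2 : ℤ) ^ Nat.log 2 (m + 1) ≤ m + 1 := mod_cast Nat.pow_log_le_self 2 m.succ_ne_zero
  simp only [Uprime, zero_mul, Int.floor_zero, decide_eq_true_eq]
  omega

lemma Uprime_one : Uprime 1 = fun _ => false := by
  funext m
  have : (m : ℤ) + 1 < 2 ^ Nat.log 2 (m + 1) * 2 := by
    exact_mod_cast pow_succ 2 (Nat.log 2 (m + 1)) ▸ Nat.lt_pow_succ_log_self one_lt_two (m + 1)
  have hfloor : ⌊(2 : ℝ) ^ Nat.log 2 (m + 1)⌋ = 2 ^ Nat.log 2 (m + 1) := by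
    exact_mod_cast Int.floor_intCast (2 ^ Nat.log 2 (m + 1))
  simp only [Uprime, one_mul, hfloor, decide_eq_false_iff_not, not_le]
  omega

lemma abs_floor_sub_floor_lt (a b : ℝ) : |((⌊a⌋ - ⌊b⌋ : ℤ) : ℝ)| < |a - b| + 1 := by
  have := Int.floor_le a
  have := Int.floor_le b
  have := Int.lt_floor_add_one a
  have := Int.lt_floor_add_one b
  rw [abs_lt]
  constructor <;> push_cast <;> linarith [le_abs_self (a - b), neg_abs_le (a - b)]

lemma card_filter_Uprime_ne_log_eq_le (x y : ℝ) (s : Finset ℕ) (k : ℕ) :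
    (#{m ∈ s | Uprime x m ≠ Uprime y m ∧ Nat.log 2 (m + 1) = k} : ℝ) ≤ |x - y| * 2 ^ k + 1 := by
  set a := ⌊x * (2 : ℝ) ^ k⌋
  set b := ⌊y * (2 : ℝ) ^ k⌋
  -- `m + 1 - 2 ^ k` is the offset of `m` in block `k`, and the two codings differ exactly at
  -- the offsets between `a` and `b`
  have hcard : #{m ∈ s | Uprime x m ≠ Uprime y m ∧ Nat.log 2 (m + 1) = k} ≤
      #(Ico (min a b) (max a b)) := by
    refine card_le_card_of_injOn (fun m => (m : ℤ) + 1 - 2 ^ k) (fun m hm => ?_)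
      (fun m _ m' _ h => by simpa using h)
    rw [mem_coe, mem_filter] at hm
    obtain ⟨-, hne, rfl⟩ := hm
    simp only [Uprime, ne_eq, decide_eq_decide] at hne
    simp only [coe_Ico, Set.mem_Ico]
    omega
  have hab : |((a - b : ℤ) : ℝ)| < |x - y| * 2 ^ k + 1 := by
    simpa [← sub_mul, abs_mul] using abs_floor_sub_floor_lt (x * 2 ^ k) (y * 2 ^ k)
  rw [Int.card_Ico, max_sub_min_eq_abs'] at hcard
  have : (#{m ∈ s | Uprime x m ≠ Uprime y m ∧ Nat.log 2 (m + 1) = k} : ℤ) ≤ |a - b| := by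
    have := abs_nonneg (a - b)
    omega
  rw [← Int.cast_abs] at hab
  exact (lt_of_le_of_lt (mod_cast this) hab).le

lemma card_filter_Uprime_ne_le (x y : ℝ) {N : ℕ} (hN : N ≠ 0) :
    (#{m ∈ range N | Uprime x m ≠ Uprime y m} : ℝ) ≤ 2 * |x - y| * N + (Nat.log 2 N + 1) := by
  set K := Nat.log 2 N
  have hblocks : #{m ∈ range N | Uprime x m ≠ Uprime y m} =
      ∑ k ∈ range (K + 1), #{m ∈ range N | Uprime x m ≠ Uprime y m ∧ Nat.log 2 (m + 1) = k} := by
    rw [card_eq_sum_card_fiberwise (f := fun m => Nat.log 2 (m + 1)) (t := range (K + 1))]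
    · simp only [filter_filter]
    · intro m hm
      rw [mem_coe, mem_filter, mem_range] at hm
      rw [mem_coe, mem_range]
      exact Nat.lt_succ_of_le (Nat.log_mono_right hm.1)
  have hpow : (2 : ℝ) ^ (K + 1) ≤ 2 * N := by
    rw [pow_succ, mul_comm]
    gcongr
    exact_mod_cast Nat.pow_log_le_self 2 hN
  calc (#{m ∈ range N | Uprime x m ≠ Uprime y m} : ℝ)
      ≤ ∑ k ∈ range (K + 1), (|x - y| * 2 ^ k + 1) := by
        rw [hblocks, Nat.cast_sum]
        exact sum_le_sum fun k _ => card_filter_Uprime_ne_log_eq_le x y _ k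
    _ = |x - y| * (2 ^ (K + 1) - 1) + (K + 1) := by
        rw [sum_add_distrib, ← mul_sum, geom_sum_eq (by norm_num)]
        norm_num
    _ ≤ 2 * |x - y| * N + (K + 1) := by nlinarith [abs_nonneg (x - y)]

lemma tendsto_natLog_add_one_div_atTop (b : ℕ) :
    Tendsto (fun N : ℕ => ((Nat.log b N : ℝ) + 1) / N) atTop (𝓝 0) := by
  have hlog : Tendsto (fun N : ℕ => Real.log N / N) atTop (𝓝 0) := by
    simpa [Function.comp_def] using
      (Real.tendsto_pow_log_div_mul_add_atTop 1 0 1 one_ne_zero).comp tendsto_natCast_atTop_atTop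
  have hbound : Tendsto (fun N : ℕ => Real.log N / N / Real.log b + 1 / N) atTop (𝓝 0) := by
    simpa using (hlog.div_const (Real.log b)).add tendsto_one_div_atTop_nhds_zero_nat
  refine tendsto_of_tendsto_of_tendsto_of_le_of_le tendsto_const_nhds hbound
    (fun N => by positivity) fun N => ?_
  calc ((Nat.log b N : ℝ) + 1) / N ≤ (Real.logb b N + 1) / N := by
        gcongr
        exact Real.natLog_le_logb N b
    _ = Real.log N / N / Real.log b + 1 / N := by
        rw [Real.logb, add_div, div_right_comm]

lemma hamIcc_mirror_le {A : Type*} [DecidableEq A] (u v : ℕ → A) (n : ℕ) :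
    hamIcc (mirror u) (mirror v) (-n) n ≤
      #{i ∈ range (n + 1) | u i ≠ v i} + #{i ∈ range n | u i ≠ v i} := by
  rw [hamIcc, filter_congr_decidable]
  calc _ ≤ #({i ∈ range (n + 1) | u i ≠ v i}.image ((↑) : ℕ → ℤ) ∪
        {i ∈ range n | u i ≠ v i}.image fun i : ℕ => -(i : ℤ) - 1) := by
        refine card_le_card ?_
        intro i hi
        rw [mem_filter, mem_Icc] at hi
        obtain ⟨⟨hl, hr⟩, hne⟩ := hi
        simp only [mem_union, mem_image, mem_filter, mem_range]
        rcases le_or_gt 0 i with h | h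
        · simp only [mirror_of_nonneg _ h] at hne
          exact Or.inl ⟨i.toNat, ⟨by omega, hne⟩, by omega⟩
        · simp only [mirror_of_neg _ h] at hne
          exact Or.inr ⟨(-i - 1).toNat, ⟨by omega, hne⟩, by omega⟩
    _ ≤ _ := (card_union_le _ _).trans (add_le_add card_image_le card_image_le)

lemma dB_mirror_le_dB1 {A : Type*} (u v : ℕ → A) : dB (mirror u) (mirror v) ≤ dB1 u v := by
  classical
  set c : ℕ → ℕ := fun N => #{i ∈ range N | u i ≠ v i}
  have hdB1 : dB1 u v = limsup (fun N : ℕ => (c N : ℝ) / N) atTop := by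
    rw [dB1]
    congr!
  have hbdd : IsBoundedUnder (· ≤ ·) atTop fun N : ℕ => (c N : ℝ) / N :=
    isBoundedUnder_of_eventually_le (a := 1) <| Eventually.of_forall fun N =>
      div_le_one_of_le₀ (mod_cast (card_filter_le _ _).trans_eq (card_range N)) N.cast_nonneg
  refine le_of_forall_pos_le_add fun η hη => ?_
  have hlt : limsup (fun N : ℕ => (c N : ℝ) / N) atTop < dB1 u v + η := by
    rw [← hdB1]
    exact lt_add_of_pos_right _ hη
  have hc : ∀ᶠ N in atTop, (c N : ℝ) ≤ (dB1 u v + η) * N := by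
    filter_upwards [eventually_lt_of_limsup_lt hlt hbdd, eventually_gt_atTop 0] with N hN hN0
    exact (div_le_iff₀ (by positivity)).1 hN.le
  obtain ⟨N₀, hN₀⟩ := eventually_atTop.1 hc
  refine limsup_le_of_le (isCoboundedUnder_le_of_le atTop fun n => by positivity) ?_
  filter_upwards [eventually_ge_atTop N₀] with n hn
  rw [div_le_iff₀ (by positivity)]
  calc (hamIcc (mirror u) (mirror v) (-n) n : ℝ) ≤ c (n + 1) + c n :=
        mod_cast hamIcc_mirror_le u v n
    _ ≤ (dB1 u v + η) * (n + 1) + (dB1 u v + η) * n := by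
        have := hN₀ (n + 1) (by omega)
        push_cast at this
        linarith [hN₀ n hn]
    _ = (dB1 u v + η) * (2 * n + 1) := by ring

lemma dB1_Uprime_le (x y : ℝ) : dB1 (Uprime x) (Uprime y) ≤ 2 * |x - y| := by
  refine le_of_forall_pos_le_add fun η hη => ?_
  refine limsup_le_of_le (isCoboundedUnder_le_of_le atTop fun n => by positivity) ?_
  filter_upwards [(tendsto_natLog_add_one_div_atTop 2).eventually (ge_mem_nhds hη),
    eventually_gt_atTop 0] with N hlog hN
  have hN' : (0 : ℝ) < N := mod_cast hN
  rw [filter_congr_decidable, div_le_iff₀ hN']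
  rw [div_le_iff₀ hN'] at hlog
  linarith [card_filter_Uprime_ne_le x y hN.ne']

lemma dB_Tprime_le (x y : ℝ) : dB (Tprime x) (Tprime y) ≤ 2 * |x - y| :=
  (dB_mirror_le_dB1 _ _).trans (dB1_Uprime_le x y)

/-- `T'` is `dB`-continuous on `[0,1]`, and provides a path
from `∞1∞` (at parameter 0) to `∞0∞` (at parameter 1), connecting the two
unary configurations in the Besicovitch space. -/
theorem Tprime_continuous_dB :
    (∀ x ∈ Set.Icc (0 : ℝ) 1, ∀ ε > (0 : ℝ), ∃ δ > (0 : ℝ),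
      ∀ y ∈ Set.Icc (0 : ℝ) 1, |x - y| < δ → dB (Tprime x) (Tprime y) < ε) ∧
    Tprime 0 = (fun _ => true) ∧ Tprime 1 = (fun _ => false) := by
  refine ⟨fun x _ ε hε => ⟨ε / 2, by positivity, fun y _ hxy => ?_⟩, ?_, ?_⟩
  · linarith [dB_Tprime_le x y]
  · rw [Tprime_eq_mirror, Uprime_zero, mirror_const]
  · rw [Tprime_eq_mirror, Uprime_one, mirror_const]
end

section
/- Let f : Σ^ℤ → Σ^ℤ be a cellular automaton whose minimal (connected) neighborhood has size r > 1. Then there exist words u, v of length r−1 and symbols a, c ∈ Σ, with the local rule giving f(uav) and f(ucv) differing in at least two coordinates; consequently, taking x = ∞(uav)∞ and y = ∞(ucv)∞, one has d_B(x,y) = 1/(2r−1) but d_B(f(x), f(y)) ≥ 2/(2r−1). Hence any cellular automaton on the full shift that is contracting with respect to d_B (i.e., d_B(f(x),f(y)) ≤ d_B(x,y) for all x,y) has a neighborhood of size 1. -/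
open Filter

/-- `F` has the size-`r` neighborhood `[a, a+r)`. -/
def HasNbhd {A : Type*} (F : (ℤ → A) → (ℤ → A)) (a : ℤ) (r : ℕ) : Prop :=
  ∃ f : (Fin r → A) → A, ∀ x i, F x i = f fun j => x (i + a + j)

/-! If the local rule `f` on the window `[a, a + r)` ignored its first or its last argument,
`F` would have a neighborhood of size `r - 1`; since two proper equivalence relations never
cover all pairs, some pair of symbols `b ≠ c` is distinguished by `f` at both ends. Putting `b` or
`c` between words `u, v` of length `r - 1` gives periodic points of period `2r - 1` that differ
on one residue class, while their images differ on the two classes where the window of `f`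
reads `u b` and `b v`. The Besicovitch distance of two periodic points is the proportion of
residues where they differ, so `F` doubles the distance of this pair. -/

open Finset Function Topology

namespace Int

theorem abs_card_Icc_filter_modEq_sub_le {n : ℤ} (hn : 0 < n) (v : ℤ) (N : ℕ) :
    |(#{i ∈ Icc (-(N : ℤ)) N | i ≡ v [ZMOD n]} : ℝ) - (2 * N + 1) / n| ≤ 1 := by
  have hcard := Ioc_filter_modEq_card (-N - 1) N hn v
  rw [Ioc_sub_one_left_eq_Icc] at hcard
  push_cast at hcard
  set X : ℚ := (N - v) / n
  set Y : ℚ := (-N - 1 - v) / n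
  have hXY : X - Y = (2 * N + 1) / n := by simp only [X, Y]; ring
  have hYX : ⌊Y⌋ ≤ ⌊X⌋ := floor_mono (by
    have : (0 : ℚ) ≤ (2 * N + 1) / n := by positivity
    linarith)
  rw [max_eq_left (sub_nonneg.2 hYX)] at hcard
  have hX := floor_le X; have hX' := lt_floor_add_one X
  have hY := floor_le Y; have hY' := lt_floor_add_one Y
  have key : |((#{i ∈ Icc (-(N : ℤ)) N | i ≡ v [ZMOD n]} : ℤ) : ℚ) - (2 * N + 1) / n| ≤ 1 := by
    rw [hcard, abs_sub_le_iff]; push_cast; constructor <;> linarith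
  exact_mod_cast key

theorem tendsto_card_Icc_filter_modEq_div {n : ℤ} (hn : 0 < n) (v : ℤ) :
    Tendsto (fun N : ℕ => (#{i ∈ Icc (-(N : ℤ)) N | i ≡ v [ZMOD n]} : ℝ) / (2 * N + 1))
      atTop (𝓝 (1 / n)) := by
  rw [tendsto_iff_norm_sub_tendsto_zero]
  refine squeeze_zero (fun _ => norm_nonneg _) (fun N => ?_)
    tendsto_one_div_add_atTop_nhds_zero_nat
  have hN : (0 : ℝ) < 2 * N + 1 := by positivity
  calc ‖(#{i ∈ Icc (-(N : ℤ)) N | i ≡ v [ZMOD n]} : ℝ) / (2 * N + 1) - 1 / n‖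
      = |(#{i ∈ Icc (-(N : ℤ)) N | i ≡ v [ZMOD n]} : ℝ) - (2 * N + 1) / n| / (2 * N + 1) := by
        rw [Real.norm_eq_abs, ← abs_of_pos hN, ← abs_div, abs_of_pos hN]
        congr 1; field_simp
    _ ≤ 1 / (2 * N + 1) := by gcongr; exact abs_card_Icc_filter_modEq_sub_le hn v N
    _ ≤ 1 / (N + 1) := by gcongr; linarith [N.cast_nonneg (α := ℝ)]

end Int

theorem card_filter_eq_sum_card_filter_modEq {n : ℤ} (hn : 0 < n) {P : ℤ → Prop}
    [DecidablePred P] (hP : Periodic P n) (m : ℤ) (s : Finset ℤ) :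
    #{i ∈ s | P i} = ∑ k ∈ Ico m (m + n) with P k, #{i ∈ s | i ≡ k [ZMOD n]} := by
  have hPmod (i : ℤ) : P (toIcoMod hn m i) = P i := by
    rw [← hP.zsmul (toIcoDiv hn m i) (toIcoMod hn m i), ← self_sub_toIcoMod hn m i,
      add_sub_cancel]
  rw [card_eq_sum_card_fiberwise (f := toIcoMod hn m) (t := {k ∈ Ico m (m + n) | P k})
    fun i hi => by
      rw [mem_coe, mem_filter] at hi ⊢
      exact ⟨mem_Ico.2 (toIcoMod_mem_Ico hn m i), (hPmod i).symm ▸ hi.2⟩]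
  refine sum_congr rfl fun k hk => congrArg card ?_
  simp only [mem_filter, mem_Ico] at hk
  ext i
  simp only [mem_filter, toIcoMod_eq_iff, Set.mem_Ico, Int.modEq_comm (a := i),
    Int.modEq_iff_add_fac, hk.1, true_and, zsmul_eq_mul, mul_comm n]
  constructor
  · exact fun ⟨⟨hi, _⟩, h⟩ => ⟨hi, h⟩
  · rintro ⟨hi, z, rfl⟩
    exact ⟨⟨hi, by simpa using (hP.zsmul z k).symm ▸ hk.2⟩, z, rfl⟩

theorem tendsto_card_Icc_filter_div_of_periodic {n : ℤ} (hn : 0 < n) {P : ℤ → Prop}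
    [DecidablePred P] (hP : Periodic P n) (m : ℤ) :
    Tendsto (fun N : ℕ => (#{i ∈ Icc (-(N : ℤ)) N | P i} : ℝ) / (2 * N + 1))
      atTop (𝓝 (#{k ∈ Ico m (m + n) | P k} / n)) := by
  have h := tendsto_finsetSum {k ∈ Ico m (m + n) | P k}
    fun k _ => Int.tendsto_card_Icc_filter_modEq_div hn k
  rw [sum_const, nsmul_eq_mul, mul_one_div] at h
  simpa only [card_filter_eq_sum_card_filter_modEq hn hP m, Nat.cast_sum, sum_div] using h

open scoped Classical in
theorem dB_eq_of_periodic {A : Type*} {x y : ℤ → A} {n : ℤ} (hn : 0 < n) (hx : Periodic x n)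
    (hy : Periodic y n) (m : ℤ) : dB x y = #{k ∈ Ico m (m + n) | x k ≠ y k} / n := by
  unfold dB hamIcc
  convert (tendsto_card_Icc_filter_div_of_periodic hn (P := fun k => x k ≠ y k)
    (fun i => by dsimp only; rw [hx i, hy i]) m).limsup_eq

theorem perPt_periodic {A : Type*} {p : ℕ} (hp : 0 < p) (w : Fin p → A) :
    Periodic (perPt hp w) p := fun i => by
  simp only [perPt, Int.add_emod_right]

theorem perPt_natCast {A : Type*} {p : ℕ} (hp : 0 < p) (w : Fin p → A) {k : ℕ} (hk : k < p) :
    perPt hp w k = w ⟨k, hk⟩ := by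
  simp only [perPt, Int.emod_eq_of_lt (Int.natCast_nonneg k) (Int.ofNat_lt.2 hk),
    Int.toNat_natCast]

theorem HasNbhd.periodic {A : Type*} {F : (ℤ → A) → ℤ → A} {a : ℤ} {r : ℕ} (hF : HasNbhd F a r)
    {x : ℤ → A} {c : ℤ} (hx : Periodic x c) : Periodic (F x) c := fun i => by
  obtain ⟨f, hf⟩ := hF
  simp only [hf, add_right_comm i c, add_right_comm (i + a) c, hx _]

theorem exists_apply_ne_and_apply_ne {α β γ : Type*} {g : α → β} {h : α → γ}
    (hg : ∃ x y, g x ≠ g y) (hh : ∃ x y, h x ≠ h y) : ∃ x y, g x ≠ g y ∧ h x ≠ h y := by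
  obtain ⟨b, c, hbc⟩ := hg
  obtain ⟨d, e, hde⟩ := hh
  by_contra! H
  have hgde : g d = g e := by_contra fun hne => hde (H d e hne)
  by_cases hbd : g b = g d
  · have hcd : g c ≠ g d := fun h' => hbc (hbd.trans h'.symm)
    exact hde ((H c d hcd).symm.trans (H c e (hgde ▸ hcd)))
  · exact hde ((H b d hbd).symm.trans (H b e (hgde ▸ hbd)))

section Neighborhood

variable {A : Type*} {F : (ℤ → A) → ℤ → A} {a : ℤ} {n : ℕ} {f : (Fin (n + 1) → A) → A}

theorem hasNbhd_add_one_of_cons_eq_cons [Nonempty A]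
    (hf : ∀ x i, F x i = f fun j => x (i + a + j))
    (h : ∀ b c (v : Fin n → A), f (Fin.cons b v) = f (Fin.cons c v)) : HasNbhd F (a + 1) n := by
  refine ⟨fun v => f (Fin.cons (Classical.arbitrary A) v), fun x i => ?_⟩
  rw [hf, ← Fin.cons_self_tail fun j : Fin (n + 1) => x (i + a + j), h _ (Classical.arbitrary A)]
  congr
  funext j
  simp only [Fin.tail, Fin.val_succ]
  push_cast
  ring_nf

theorem hasNbhd_of_snoc_eq_snoc [Nonempty A]
    (hf : ∀ x i, F x i = f fun j => x (i + a + j))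
    (h : ∀ (u : Fin n → A) b c, f (Fin.snoc u b) = f (Fin.snoc u c)) : HasNbhd F a n := by
  refine ⟨fun u => f (Fin.snoc u (Classical.arbitrary A)), fun x i => ?_⟩
  rw [hf, ← Fin.snoc_init_self fun j : Fin (n + 1) => x (i + a + j), h _ _ (Classical.arbitrary A)]
  rfl

theorem exists_snoc_ne_and_cons_ne [Nonempty A] (hf : ∀ x i, F x i = f fun j => x (i + a + j))
    (hmin : ∀ a', ¬ HasNbhd F a' n) :
    ∃ (b c : A) (u v : Fin n → A), f (Fin.snoc u b) ≠ f (Fin.snoc u c) ∧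
      f (Fin.cons b v) ≠ f (Fin.cons c v) := by
  have hcons : ∃ b c, (fun v : Fin n → A => f (Fin.cons b v)) ≠ fun v => f (Fin.cons c v) := by
    by_contra! h
    exact hmin (a + 1) (hasNbhd_add_one_of_cons_eq_cons hf fun b c v => congrFun (h b c) v)
  have hsnoc : ∃ b c, (fun u : Fin n → A => f (Fin.snoc u b)) ≠ fun u => f (Fin.snoc u c) := by
    by_contra! h
    exact hmin a (hasNbhd_of_snoc_eq_snoc hf fun u b c => congrFun (h b c) u)
  obtain ⟨b, c, hbc_cons, hbc_snoc⟩ := exists_apply_ne_and_apply_ne hcons hsnoc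
  obtain ⟨v, hv⟩ := Function.ne_iff.1 hbc_cons
  obtain ⟨u, hu⟩ := Function.ne_iff.1 hbc_snoc
  exact ⟨b, c, u, v, hu, hv⟩

end Neighborhood

section MidWord

variable {A : Type*} {n : ℕ}

def midWord (u : Fin n → A) (b : A) (v : Fin n → A) : Fin (2 * n + 1) → A := fun j =>
  if h : (j : ℕ) < n then u ⟨j, h⟩ else if h' : (j : ℕ) = n then b else v ⟨j - (n + 1), by omega⟩

theorem midWord_ne_midWord_iff {u v : Fin n → A} {b c : A} (hbc : b ≠ c) (j : Fin (2 * n + 1)) :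
    midWord u b v j ≠ midWord u c v j ↔ (j : ℕ) = n := by
  unfold midWord
  split_ifs <;> simp_all; omega

theorem perPt_midWord_natCast_eq_snoc (u v : Fin n → A) (b : A) :
    (fun j : Fin (n + 1) => perPt (Nat.succ_pos _) (midWord u b v) j) = Fin.snoc u b := by
  funext j
  rw [perPt_natCast _ _ (by omega)]
  induction j using Fin.lastCases <;> simp [midWord]

theorem perPt_midWord_natCast_add_eq_cons (u v : Fin n → A) (b : A) :
    (fun j : Fin (n + 1) => perPt (Nat.succ_pos _) (midWord u b v) (n + j)) = Fin.cons b v := by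
  funext j
  rw [← Nat.cast_add, perPt_natCast _ _ (by omega)]
  induction j using Fin.cases with
  | zero => simp [midWord]
  | succ i => simpa [midWord] using congrArg v (Fin.ext (by simp; omega))

open scoped Classical in
theorem dB_perPt_midWord {u v : Fin n → A} {b c : A} (hbc : b ≠ c) :
    dB (perPt (Nat.succ_pos _) (midWord u b v)) (perPt (Nat.succ_pos _) (midWord u c v)) =
      1 / (2 * n + 1) := by
  rw [dB_eq_of_periodic (by omega) (perPt_periodic _ _) (perPt_periodic _ _) 0]
  have : {k ∈ Ico 0 (0 + ((2 * n + 1 : ℕ) : ℤ)) |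
      perPt (Nat.succ_pos _) (midWord u b v) k ≠ perPt (Nat.succ_pos _) (midWord u c v) k} =
      {(n : ℤ)} := by
    ext k
    simp only [mem_filter, mem_Ico, mem_singleton]
    constructor
    · rintro ⟨⟨hk0, hkp⟩, hk⟩
      lift k to ℕ using hk0
      rw [perPt_natCast _ _ (by omega), perPt_natCast _ _ (by omega),
        midWord_ne_midWord_iff hbc] at hk
      exact_mod_cast hk
    · rintro rfl
      refine ⟨⟨by omega, by omega⟩, ?_⟩
      rw [perPt_natCast _ _ (by omega), perPt_natCast _ _ (by omega), midWord_ne_midWord_iff hbc]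
  rw [this, card_singleton]
  push_cast
  rfl

theorem two_div_le_dB_image_perPt_midWord {F : (ℤ → A) → ℤ → A} {a : ℤ}
    {f : (Fin (n + 1) → A) → A} (hn : 0 < n) (hf : ∀ x i, F x i = f fun j => x (i + a + j))
    {u v : Fin n → A} {b c : A} (hu : f (Fin.snoc u b) ≠ f (Fin.snoc u c))
    (hv : f (Fin.cons b v) ≠ f (Fin.cons c v)) :
    2 / (2 * n + 1) ≤ dB (F (perPt (Nat.succ_pos _) (midWord u b v)))
      (F (perPt (Nat.succ_pos _) (midWord u c v))) := by
  have hF : HasNbhd F a (n + 1) := ⟨f, hf⟩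
  classical
  rw [dB_eq_of_periodic (by omega) (hF.periodic (perPt_periodic _ _))
    (hF.periodic (perPt_periodic _ _)) (-a)]
  push_cast
  gcongr
  have hsub : ({-a, -a + n} : Finset ℤ) ⊆ {k ∈ Ico (-a) (-a + (2 * n + 1)) |
      F (perPt (Nat.succ_pos _) (midWord u b v)) k ≠
        F (perPt (Nat.succ_pos _) (midWord u c v)) k} := by
    intro k hk
    rw [mem_insert, mem_singleton] at hk
    rw [mem_filter, mem_Ico, hf, hf]
    rcases hk with rfl | rfl
    · simpa only [neg_add_cancel, zero_add, perPt_midWord_natCast_eq_snoc] using ⟨by omega, hu⟩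
    · simpa only [neg_add_cancel_comm, perPt_midWord_natCast_add_eq_cons] using ⟨by omega, hv⟩
  exact_mod_cast (card_pair (by omega)).symm.le.trans (card_le_card hsub)

end MidWord

/-- if the minimal neighborhood of a CA has size `r > 1`, then there
are two periodic points `∞w∞`, `∞w'∞` of period `2r-1`, with `w, w'` differing in
exactly one coordinate, with `d_B = 1/(2r-1)` but images at distance `≥ 2/(2r-1)`;
hence a `dB`-contracting CA on the full shift has a neighborhood of size 1. -/
theorem contracting_ca_radius_one {A : Type*}
    (F : (ℤ → A) → (ℤ → A)) (r : ℕ) (hr : 1 < r)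
    (hnbhd : ∃ a : ℤ, HasNbhd F a r)
    (hmin : ∀ (a : ℤ) (r' : ℕ), r' < r → ¬ HasNbhd F a r') :
    (∃ w w' : Fin (2 * r - 1) → A,
      (∃! j : Fin (2 * r - 1), w j ≠ w' j) ∧
      dB (perPt (n := 2 * r - 1) (by omega) w) (perPt (n := 2 * r - 1) (by omega) w')
        = 1 / (2 * (r : ℝ) - 1) ∧
      2 / (2 * (r : ℝ) - 1) ≤
        dB (F (perPt (n := 2 * r - 1) (by omega) w)) (F (perPt (n := 2 * r - 1) (by omega) w'))) ∧
    ((∀ x y : ℤ → A, dB (F x) (F y) ≤ dB x y) → False) := by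
  obtain ⟨a, f, hf⟩ := hnbhd
  obtain ⟨n, rfl⟩ : ∃ n, r = n + 1 := ⟨r - 1, by omega⟩
  have : Nonempty A := by
    by_contra hA
    rw [not_nonempty_iff] at hA
    exact hmin a 1 hr ⟨fun w => w 0, fun x => isEmptyElim (x 0)⟩
  obtain ⟨b, c, u, v, hu, hv⟩ := exists_snoc_ne_and_cons_ne hf fun a' => hmin a' n n.lt_succ_self
  have hbc : b ≠ c := by rintro rfl; exact hu rfl
  have hperiod : 2 * ((n + 1 : ℕ) : ℝ) - 1 = 2 * n + 1 := by push_cast; ring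
  have hdist := dB_perPt_midWord (u := u) (v := v) hbc
  have hdist_image := two_div_le_dB_image_perPt_midWord (by omega) hf hu hv
  rw [← hperiod] at hdist hdist_image
  -- `Fin (2 * n + 1)` and `Fin (2 * (n + 1) - 1)` are definitionally equal
  refine ⟨⟨midWord u b v, midWord u c v, ?_, hdist, hdist_image⟩, fun hcontr => ?_⟩
  · refine ⟨⟨n, by omega⟩, (midWord_ne_midWord_iff hbc _).2 rfl, fun j hj => ?_⟩
    exact Fin.ext ((midWord_ne_midWord_iff hbc j).1 hj)
  · have hle := hdist_image.trans ((hcontr _ _).trans_eq hdist)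
    rw [hperiod, div_le_div_iff_of_pos_right (by positivity)] at hle
    norm_num at hle
end

section
/- A cellular automaton f on the full shift Σ^ℤ whose global map is an isometry for the Besicovitch pseudometric is a composition of a power of the shift and a symbol permutation: there exist n ∈ ℤ and a bijection g : Σ → Σ with f = σ^n ∘ ḡ, where ḡ is g applied coordinatewise. -/
open Filter
open Topology

noncomputable def cnt (P : ℤ → Prop) (c d : ℤ) : ℕ :=
  (@Finset.filter ℤ P (Classical.decPred _) (Finset.Icc c d)).card

lemma cnt_congr {P Q : ℤ → Prop} {c d : ℤ} (h : ∀ i, c ≤ i → i ≤ d → (P i ↔ Q i)) :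
    cnt P c d = cnt Q c d := by
  classical
  unfold cnt
  congr 1
  apply Finset.filter_congr
  intro i hi
  simp only [Finset.mem_Icc] at hi
  exact h i hi.1 hi.2

lemma cnt_empty (P : ℤ → Prop) {c d : ℤ} (h : d < c) : cnt P c d = 0 := by
  unfold cnt
  rw [Finset.Icc_eq_empty (by omega)]
  simp

lemma cnt_mono (P : ℤ → Prop) {c d c' d' : ℤ} (h1 : c' ≤ c) (h2 : d ≤ d') :
    cnt P c d ≤ cnt P c' d' := by
  classical
  exact Finset.card_le_card (Finset.filter_subset_filter _ (Finset.Icc_subset_Icc h1 h2))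

lemma cnt_split (P : ℤ → Prop) {c e d : ℤ} (h1 : c ≤ e + 1) (h2 : e ≤ d) :
    cnt P c d = cnt P c e + cnt P (e + 1) d := by
  classical
  unfold cnt
  rw [← Finset.card_union_of_disjoint, ← Finset.filter_union]
  · congr 2
    ext i
    simp only [Finset.mem_union, Finset.mem_Icc]
    omega
  · apply Finset.disjoint_filter_filter
    rw [Finset.disjoint_left]
    intro i hi hi'
    simp only [Finset.mem_Icc] at *
    omega

section PerCount1
variable {P : ℤ → Prop} {p : ℤ} (hP : ∀ i, P (i + p) ↔ P i) (hp : 0 < p)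
include hP hp

lemma cnt_step (c : ℤ) : cnt P c (c + p - 1) = cnt P (c + 1) (c + p) := by
  classical
  unfold cnt
  rw [show Finset.Icc c (c + p - 1) = insert c (Finset.Icc (c+1) (c+p-1)) from by
        ext i; simp only [Finset.mem_insert, Finset.mem_Icc]; omega,
      show Finset.Icc (c+1) (c+p) = insert (c+p) (Finset.Icc (c+1) (c+p-1)) from by
        ext i; simp only [Finset.mem_insert, Finset.mem_Icc]; omega,
      Finset.filter_insert, Finset.filter_insert]
  by_cases hc : P c
  · rw [if_pos hc, if_pos ((hP c).mpr hc)]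
    rw [Finset.card_insert_of_notMem, Finset.card_insert_of_notMem]
    · intro h; simp only [Finset.mem_filter, Finset.mem_Icc] at h; omega
    · intro h; simp only [Finset.mem_filter, Finset.mem_Icc] at h; omega
  · rw [if_neg hc, if_neg (fun h => hc ((hP c).mp h))]

lemma cnt_period_const (c : ℤ) : cnt P c (c + p - 1) = cnt P 0 (p - 1) := by
  have key : ∀ c : ℤ, cnt P c (c + p - 1) = cnt P (c+1) ((c+1) + p - 1) := by
    intro c
    rw [cnt_step hP hp c]
    congr 1
    ring
  have key2 : ∀ n : ℕ, ∀ c : ℤ, cnt P c (c + p - 1) = cnt P (c + n) ((c + n) + p - 1) := by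
    intro n
    induction n with
    | zero => intro c; norm_num
    | succ k ih =>
      intro c
      rw [key c, ih (c+1), show (c+1)+(k:ℤ) = c + (((k+1):ℕ):ℤ) by push_cast; ring]
  rcases le_or_gt 0 c with h | h
  · obtain ⟨n, rfl⟩ : ∃ n : ℕ, c = (n : ℤ) := ⟨c.toNat, by omega⟩
    have h0 := key2 n 0
    norm_num at h0
    exact h0.symm
  · obtain ⟨n, rfl⟩ : ∃ n : ℕ, c = -(n : ℤ) := ⟨(-c).toNat, by omega⟩
    have h0 := key2 n (-(n:ℤ))
    norm_num at h0
    exact h0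

end PerCount1

section PerCount2
variable {P : ℤ → Prop} {p : ℤ} (hP : ∀ i, P (i + p) ↔ P i) (hp : 0 < p)

include hP hp

lemma cnt_period_mul (q : ℕ) (c : ℤ) :
    cnt P c (c + p * q - 1) = q * cnt P 0 (p - 1) := by
  induction q generalizing c with
  | zero => norm_num; exact cnt_empty P (by omega)
  | succ k ih =>
    have hpk : 0 ≤ p * (k : ℤ) := by positivity
    have hsplit : cnt P c (c + p * ((k:ℕ)+1 : ℕ) - 1)
        = cnt P c (c + p - 1) + cnt P (c + p) (c + p * ((k:ℕ)+1:ℕ) - 1) := by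
      rw [cnt_split P (e := c + p - 1) (by omega) (by push_cast; nlinarith),
          show c + p - 1 + 1 = c + p by ring]
    rw [hsplit, cnt_period_const hP hp c,
        show c + p * ((k:ℕ)+1:ℕ) - 1 = (c + p) + p * (k:ℕ) - 1 by push_cast; ring,
        ih (c + p)]
    ring

lemma cnt_bounds {c d : ℤ} (q : ℕ) (h1 : p * q ≤ d - c + 1) (h2 : d - c + 1 ≤ p * (q + 1)) :
    q * cnt P 0 (p-1) ≤ cnt P c d ∧ cnt P c d ≤ (q+1) * cnt P 0 (p-1) := by
  constructor
  · rw [← cnt_period_mul hP hp q c]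
    exact cnt_mono P le_rfl (by linarith)
  · rw [← cnt_period_mul hP hp (q+1) c]
    refine cnt_mono P le_rfl ?_
    push_cast at h2 ⊢
    linarith

end PerCount2

lemma cnt_eq_one {P : ℤ → Prop} {c d : ℤ} (h : cnt P c d = 1) :
    ∃ i, c ≤ i ∧ i ≤ d ∧ P i ∧ (∀ j, c ≤ j → j ≤ d → P j → j = i) := by
  classical
  unfold cnt at h
  obtain ⟨i, hi⟩ := Finset.card_eq_one.mp h
  have hmem : ∀ j : ℤ, ((c ≤ j ∧ j ≤ d) ∧ P j) ↔ j = i := by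
    intro j
    rw [← Finset.mem_singleton, ← hi, Finset.mem_filter, Finset.mem_Icc]
  have hii := (hmem i).mpr rfl
  exact ⟨i, hii.1.1, hii.1.2, hii.2, fun j h1 h2 hP => (hmem j).mp ⟨⟨h1, h2⟩, hP⟩⟩

lemma cnt_eq_two {P : ℤ → Prop} {c d : ℤ} {i₁ i₂ : ℤ} (h : cnt P c d = 2)
    (hsub : ∀ j, P j → j = i₁ ∨ j = i₂) : i₁ ≠ i₂ ∧ P i₁ ∧ P i₂ := by
  classical
  unfold cnt at h
  obtain ⟨u, v, huv, hset⟩ := Finset.card_eq_two.mp h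
  have hu : u ∈ @Finset.filter ℤ P (Classical.decPred _) (Finset.Icc c d) := by
    rw [hset]; exact Finset.mem_insert_self u {v}
  have hv : v ∈ @Finset.filter ℤ P (Classical.decPred _) (Finset.Icc c d) := by
    rw [hset]; exact Finset.mem_insert_of_mem (Finset.mem_singleton_self v)
  rw [Finset.mem_filter] at hu hv
  have hPu := hu.2
  have hPv := hv.2
  rcases hsub u hPu with rfl | rfl <;> rcases hsub v hPv with rfl | rfl
  · exact absurd rfl huv
  · exact ⟨huv, hPu, hPv⟩
  · exact ⟨huv.symm, hPv, hPu⟩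
  · exact absurd rfl huv

lemma dB_periodic {A : Type*} (x y : ℤ → A) (p : ℕ) (hp : 0 < p)
    (hx : ∀ i, x (i + p) = x i) (hy : ∀ i, y (i + p) = y i) :
    dB x y = (cnt (fun i => x i ≠ y i) 0 ((p:ℤ) - 1) : ℝ) / p := by
  set P : ℤ → Prop := fun i => x i ≠ y i with hPdef
  have hP : ∀ i, P (i + p) ↔ P i := by
    intro i
    simp only [hPdef, hx, hy]
  have hpZ : (0:ℤ) < (p:ℤ) := by exact_mod_cast hp
  set k := cnt P 0 ((p:ℤ)-1) with hkdef
  have hppos : (0:ℝ) < (p:ℝ) := by exact_mod_cast hp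
  have hK0 : (0:ℝ) ≤ (k:ℝ) := by positivity
  -- the tendsto statement
  have key : Tendsto (fun n : ℕ => (hamIcc x y (-(n:ℤ)) n : ℝ) / (2 * n + 1)) atTop
      (𝓝 ((k:ℝ)/p)) := by
    have hdeno : Tendsto (fun n : ℕ => 2*(n:ℝ)+1) atTop atTop := by
      apply Filter.tendsto_atTop_add_const_right
      exact Tendsto.const_mul_atTop two_pos tendsto_natCast_atTop_atTop
    have htail : Tendsto (fun n : ℕ => (k:ℝ)/(2*(n:ℝ)+1)) atTop (𝓝 0) :=
      Tendsto.div_atTop tendsto_const_nhds hdeno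
    have hlo : Tendsto (fun n : ℕ => (k:ℝ)/p - (k:ℝ)/(2*(n:ℝ)+1)) atTop (𝓝 ((k:ℝ)/p)) := by
      have := (tendsto_const_nhds (x := (k:ℝ)/p) (f := atTop)).sub htail
      simpa using this
    have hhi : Tendsto (fun n : ℕ => (k:ℝ)/p + (k:ℝ)/(2*(n:ℝ)+1)) atTop (𝓝 ((k:ℝ)/p)) := by
      have := (tendsto_const_nhds (x := (k:ℝ)/p) (f := atTop)).add htail
      simpa using this
    apply tendsto_of_tendsto_of_tendsto_of_le_of_le hlo hhi
    · -- lower bound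
      intro n
      set q : ℕ := (2*n+1) / p with hq
      have hdm := Nat.div_add_mod (2*n+1) p
      have hmlt := Nat.mod_lt (2*n+1) hp
      rw [← hq] at hdm
      have h1 : p * q ≤ 2*n+1 := Nat.le.intro hdm
      have h2 : 2*n+1 < p * (q+1) := by
        rw [Nat.mul_add, Nat.mul_one]
        omega
      have h1' : (p:ℤ) * q ≤ (n:ℤ) - (-(n:ℤ)) + 1 := by push_cast; push_cast at h1; linarith
      have h2' : (n:ℤ) - (-(n:ℤ)) + 1 ≤ (p:ℤ) * (q+1) := by push_cast; push_cast at h2; nlinarith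
      obtain ⟨hb1, hb2⟩ := cnt_bounds hP hpZ q h1' h2'
      rw [← hkdef] at hb1 hb2
      have hham : hamIcc x y (-(n:ℤ)) n = cnt P (-(n:ℤ)) n := rfl
      set C : ℝ := (cnt P (-(n:ℤ)) n : ℝ) with hC
      have hLpos : (0:ℝ) < 2*(n:ℝ)+1 := by positivity
      have hCq : (q:ℝ) * k ≤ C := by rw [hC]; exact_mod_cast hb1
      have hLle : 2*(n:ℝ)+1 ≤ (p:ℝ)*q + p := by
        have h2r : ((2*n+1 : ℕ):ℝ) < ((p*(q+1) : ℕ):ℝ) := by exact_mod_cast h2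
        push_cast at h2r
        nlinarith
      have hLge : (p:ℝ)*q ≤ 2*(n:ℝ)+1 := by exact_mod_cast h1
      have e1 : (k:ℝ) * (2*(n:ℝ)+1) ≤ C * p + k * p := by nlinarith
      have goal1 : (k:ℝ)/p ≤ (C+k)/(2*(n:ℝ)+1) := by
        rw [div_le_div_iff₀ hppos hLpos]
        linarith
      show (k:ℝ)/p - (k:ℝ)/(2*(n:ℝ)+1) ≤ (hamIcc x y (-(n:ℤ)) n : ℝ)/(2*(n:ℝ)+1)
      rw [hham]
      have expand : (C+k)/(2*(n:ℝ)+1) - (k:ℝ)/(2*(n:ℝ)+1) = C/(2*(n:ℝ)+1) := by ring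
      rw [← hC]
      linarith
    · -- upper bound
      intro n
      set q : ℕ := (2*n+1) / p with hq
      have hdm := Nat.div_add_mod (2*n+1) p
      have hmlt := Nat.mod_lt (2*n+1) hp
      rw [← hq] at hdm
      have h1 : p * q ≤ 2*n+1 := Nat.le.intro hdm
      have h1' : (p:ℤ) * q ≤ (n:ℤ) - (-(n:ℤ)) + 1 := by push_cast; push_cast at h1; linarith
      have h2 : 2*n+1 < p * (q+1) := by
        rw [Nat.mul_add, Nat.mul_one]
        omega
      have h2' : (n:ℤ) - (-(n:ℤ)) + 1 ≤ (p:ℤ) * (q+1) := by push_cast; push_cast at h2; nlinarith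
      obtain ⟨hb1, hb2⟩ := cnt_bounds hP hpZ q h1' h2'
      rw [← hkdef] at hb1 hb2
      have hham : hamIcc x y (-(n:ℤ)) n = cnt P (-(n:ℤ)) n := rfl
      set C : ℝ := (cnt P (-(n:ℤ)) n : ℝ) with hC
      have hLpos : (0:ℝ) < 2*(n:ℝ)+1 := by positivity
      have hCq : C ≤ ((q:ℝ)+1) * k := by rw [hC]; exact_mod_cast hb2
      have hLge : (p:ℝ)*q ≤ 2*(n:ℝ)+1 := by exact_mod_cast h1
      have e2 : C * p ≤ (k:ℝ) * (2*(n:ℝ)+1) + k * p := by nlinarith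
      have goal2 : (C - k)/(2*(n:ℝ)+1) ≤ (k:ℝ)/p := by
        rw [div_le_div_iff₀ hLpos hppos]
        linarith
      show (hamIcc x y (-(n:ℤ)) n : ℝ)/(2*(n:ℝ)+1) ≤ (k:ℝ)/p + (k:ℝ)/(2*(n:ℝ)+1)
      rw [hham, ← hC]
      have expand : C/(2*(n:ℝ)+1) - (k:ℝ)/(2*(n:ℝ)+1) = (C-k)/(2*(n:ℝ)+1) := by ring
      linarith
  rw [dB]
  have : (fun n : ℕ => (hamIcc x y (-(n:ℤ)) n : ℝ) / (2 * n + 1))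
      = fun n : ℕ => (hamIcc x y (-(n:ℤ)) n : ℝ) / (2 * (n:ℝ) + 1) := by
    funext n; norm_num
  rw [this]
  exact key.limsup_eq

section CASec
variable {A : Type*} (F : (ℤ → A) → (ℤ → A)) (r : ℕ)
  (floc : (Fin (2*r+1) → A) → A)
  (hF : ∀ x i, F x i = floc fun j => x (i - r + j))

include hF

lemma F_local {x y : ℤ → A} {i : ℤ} (h : ∀ u, i - r ≤ u → u ≤ i + r → x u = y u) :
    F x i = F y i := by
  rw [hF, hF]
  congr 1
  funext j
  have hj : ((j:ℕ):ℤ) < 2*(r:ℤ)+1 := by exact_mod_cast j.isLt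
  have hj0 : (0:ℤ) ≤ ((j:ℕ):ℤ) := Int.ofNat_nonneg _
  apply h <;> omega

lemma F_shift (x : ℤ → A) (t i : ℤ) : F (fun u => x (u + t)) i = F x (i + t) := by
  rw [hF, hF]
  congr 1
  funext j
  congr 1
  ring

lemma F_per {x : ℤ → A} {p : ℤ} (hx : ∀ i, x (i + p) = x i) (i : ℤ) :
    F x (i + p) = F x i := by
  have hxe : (fun u => x (u + p)) = x := funext hx
  calc F x (i + p) = F (fun u => x (u + p)) i := (F_shift F r floc hF x p i).symm
    _ = F x i := by rw [hxe]

lemma F_eq_outside {x y : ℤ → A} (S : Finset ℤ) (hS : ∀ i, x i ≠ y i ↔ i ∈ S) (j : ℤ)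
    (hj : ∀ i ∈ S, i < j - r ∨ j + r < i) : F x j = F y j := by
  apply F_local F r floc hF
  intro u h1 h2
  by_contra hne
  rcases hj u ((hS u).mp hne) with h | h <;> omega

theorem master (hiso : ∀ x y : ℤ → A, dB (F x) (F y) = dB x y)
    (x y : ℤ → A) (S : Finset ℤ) (hS : ∀ i, x i ≠ y i ↔ i ∈ S)
    (lo hi : ℤ) (hrange : ∀ i ∈ S, lo ≤ i ∧ i ≤ hi) (hlh : lo ≤ hi) :
    cnt (fun i => F x i ≠ F y i) (lo - r) (hi + r) = S.card := by
  classical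
  set p : ℕ := (hi - lo).toNat + 4*r + 1 with hpdef
  have hp : 0 < p := by omega
  have hpZ : (p:ℤ) = (hi - lo) + 4*(r:ℤ) + 1 := by
    rw [hpdef]
    push_cast [Int.toNat_of_nonneg (by omega : (0:ℤ) ≤ hi - lo)]
    ring
  set a : ℤ := lo - 2*(r:ℤ) with hadef
  set xt : ℤ → A := fun i => x (a + (i - a) % p) with hxt
  set yt : ℤ → A := fun i => y (a + (i - a) % p) with hyt
  have hpZ0 : (0:ℤ) < (p:ℤ) := by exact_mod_cast hp
  have hper : ∀ (z : ℤ → A) (i : ℤ), z (a + (i + p - a) % p) = z (a + (i - a) % p) := by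
    intro z i
    congr 2
    rw [show i + p - a = (i - a) + (p:ℤ)*1 by ring, Int.add_mul_emod_self_left]
  have hagree : ∀ (z : ℤ → A) (i : ℤ), a ≤ i → i ≤ a + p - 1 →
      z (a + (i - a) % p) = z i := by
    intro z i h1 h2
    congr 1
    rw [Int.emod_eq_of_lt (by omega) (by omega)]
    ring
  have hxt_per : ∀ i, xt (i + p) = xt i := fun i => hper x i
  have hyt_per : ∀ i, yt (i + p) = yt i := fun i => hper y i
  have hin_iff : ∀ i, (xt i ≠ yt i) ↔ (a + (i - a) % p) ∈ S := fun i => hS _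
  have hSsub : ∀ i ∈ S, a ≤ i ∧ i ≤ a + p - 1 := by
    intro i hi'
    have := hrange i hi'
    omega
  -- input count
  have hPper : ∀ i, (xt (i+p) ≠ yt (i+p)) ↔ (xt i ≠ yt i) := by
    intro i; rw [hxt_per, hyt_per]
  have hin_cnt : cnt (fun i => xt i ≠ yt i) 0 ((p:ℤ)-1) = S.card := by
    rw [← cnt_period_const hPper hpZ0 a]
    unfold cnt
    congr 1
    ext i
    simp only [Finset.mem_filter, Finset.mem_Icc]
    constructor
    · rintro ⟨⟨h1, h2⟩, hne⟩
      have := (hin_iff i).mp hne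
      rwa [Int.emod_eq_of_lt (by omega) (by omega), show a + (i - a) = i by ring] at this
    · intro hiS
      obtain ⟨h1, h2⟩ := hSsub i hiS
      refine ⟨⟨h1, h2⟩, ?_⟩
      rw [hxt, hyt]
      simp only
      rw [hagree x i h1 h2, hagree y i h1 h2]
      exact (hS i).mpr hiS
  have hdB_in : dB xt yt = (S.card : ℝ)/p := by
    rw [dB_periodic xt yt p hp hxt_per hyt_per, hin_cnt]
  -- output count
  have hFxt_per : ∀ i, F xt (i + p) = F xt i := fun i => F_per F r floc hF hxt_per i
  have hFyt_per : ∀ i, F yt (i + p) = F yt i := fun i => F_per F r floc hF hyt_per i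
  have hQper : ∀ i, (F xt (i+p) ≠ F yt (i+p)) ↔ (F xt i ≠ F yt i) := by
    intro i; rw [hFxt_per, hFyt_per]
  set K := cnt (fun i => F xt i ≠ F yt i) 0 ((p:ℤ)-1) with hKdef
  have hdB_out : dB (F xt) (F yt) = (K : ℝ)/p := by
    rw [dB_periodic (F xt) (F yt) p hp hFxt_per hFyt_per]
  -- K = count over [lo-r, hi+r]
  have hKsplit : K = cnt (fun i => F xt i ≠ F yt i) (lo - r) (hi + r)
      + cnt (fun i => F xt i ≠ F yt i) (hi + r + 1) ((lo - r) + p - 1) := by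
    rw [hKdef, ← cnt_period_const hQper hpZ0 (lo - r)]
    exact cnt_split _ (by omega) (by omega)
  have hzero : cnt (fun i => F xt i ≠ F yt i) (hi + r + 1) ((lo - r) + p - 1) = 0 := by
    unfold cnt
    rw [Finset.card_eq_zero]
    apply Finset.eq_empty_iff_forall_notMem.mpr
    intro i hmem
    simp only [Finset.mem_filter, Finset.mem_Icc] at hmem
    obtain ⟨hi', hne'⟩ := hmem
    apply hne'
    apply F_local F r floc hF
    intro u h1 h2
    have hnotS : (a + (u - a) % p) ∉ S := by
      intro hmem
      have hb := hrange _ hmem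
      rcases le_or_gt u (a + p - 1) with hc | hc
      · rw [Int.emod_eq_of_lt (by omega) (by omega)] at hb
        omega
      · rw [show u - a = (u - a - p) + (p:ℤ)*1 by ring, Int.add_mul_emod_self_left,
            Int.emod_eq_of_lt (by omega) (by omega)] at hb
        omega
    by_contra hne
    exact hnotS ((hin_iff u).mp hne)
  have htransfer : cnt (fun i => F xt i ≠ F yt i) (lo - r) (hi + r)
      = cnt (fun i => F x i ≠ F y i) (lo - r) (hi + r) := by
    apply cnt_congr
    intro i h1 h2
    have hx' : F xt i = F x i := by
      apply F_local F r floc hF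
      intro u hu1 hu2
      exact hagree x u (by omega) (by omega)
    have hy' : F yt i = F y i := by
      apply F_local F r floc hF
      intro u hu1 hu2
      exact hagree y u (by omega) (by omega)
    rw [hx', hy']
  -- isometry
  have hiso' := hiso xt yt
  rw [hdB_out, hdB_in] at hiso'
  have hppos : (0:ℝ) < (p:ℝ) := by exact_mod_cast hp
  have hKS' : K = S.card := by
    field_simp at hiso'
    exact_mod_cast hiso'
  omega
end CASec
section CAComb
variable {A : Type*} (F : (ℤ → A) → (ℤ → A)) (r : ℕ)
  (floc : (Fin (2*r+1) → A) → A)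
  (hF : ∀ x i, F x i = floc fun j => x (i - r + j))

variable (hiso : ∀ x y : ℤ → A, dB (F x) (F y) = dB x y)

include hF hiso

lemma one_diff (x : ℤ → A) (s : ℤ) (b : A) (hb : b ≠ x s) :
    ∃ i, (s - (r:ℤ) ≤ i ∧ i ≤ s + r) ∧
      ∀ j, (F (Function.update x s b) j ≠ F x j ↔ j = i) := by
  classical
  set y := Function.update x s b with hy
  have hS : ∀ i, x i ≠ y i ↔ i ∈ ({s} : Finset ℤ) := by
    intro i
    rcases eq_or_ne i s with rfl | hne
    · simp only [hy, Function.update_self, Finset.mem_singleton]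
      exact iff_of_true (Ne.symm hb) trivial
    · simp only [hy, Function.update_of_ne hne, Finset.mem_singleton]
      exact iff_of_false (fun h => h rfl) hne
  have hout : ∀ j, ¬(s - (r:ℤ) ≤ j ∧ j ≤ s + r) → F x j = F y j := by
    intro j hj
    apply F_eq_outside F r floc hF {s} hS j
    intro i hi
    simp only [Finset.mem_singleton] at hi
    subst hi
    omega
  have hcnt := master F r floc hF hiso x y {s} hS s s
    (by intro i hi; simp only [Finset.mem_singleton] at hi; omega) le_rfl
  rw [Finset.card_singleton] at hcnt
  obtain ⟨i, h1, h2, hPi, huniq⟩ := cnt_eq_one hcnt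
  refine ⟨i, ⟨h1, h2⟩, ?_⟩
  intro j
  constructor
  · intro hj
    have hjIcc : s - (r:ℤ) ≤ j ∧ j ≤ s + r := by
      by_contra hc
      exact hj ((hout j hc).symm)
    exact huniq j hjIcc.1 hjIcc.2 (Ne.symm hj)
  · rintro rfl
    exact Ne.symm hPi

lemma exists_isD [Nontrivial A] (x : ℤ → A) (s : ℤ) :
    ∃ i, (s - (r:ℤ) ≤ i ∧ i ≤ s + r) ∧
      ∀ b, b ≠ x s → ∀ j, (F (Function.update x s b) j ≠ F x j ↔ j = i) := by
  classical
  obtain ⟨b₀, hb₀⟩ := exists_ne (x s)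
  obtain ⟨i, hwin, hchar⟩ := one_diff F r floc hF hiso x s b₀ hb₀
  refine ⟨i, hwin, ?_⟩
  intro b hb j
  obtain ⟨i', hwin', hchar'⟩ := one_diff F r floc hF hiso x s b hb
  suffices hii : i' = i by rw [hchar' j, hii]
  rcases eq_or_ne b b₀ with rfl | hbb
  · have h1 : F (Function.update x s b) i' ≠ F x i' := (hchar' i').mpr rfl
    exact (hchar i').mp h1
  -- b ≠ b₀ : compare the two updated configurations
  by_contra hii
  set y₀ := Function.update x s b₀ with hy₀
  have hby : b ≠ y₀ s := by rw [hy₀, Function.update_self]; exact hbb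
  obtain ⟨j₀, hwin₀, hchar₀⟩ := one_diff F r floc hF hiso y₀ s b hby
  have hupd : Function.update y₀ s b = Function.update x s b := by
    rw [hy₀, Function.update_idem]
  rw [hupd] at hchar₀
  -- F (update x s b) i' ≠ F x i', but F y₀ i' = F x i' since i' ≠ i
  have h1 : F (Function.update x s b) i' ≠ F x i' := (hchar' i').mpr rfl
  have h2 : F y₀ i' = F x i' := by
    by_contra hc
    exact hii ((hchar i').mp (fun h => hc h))
  have h3 : F (Function.update x s b) i' ≠ F y₀ i' := by rw [h2]; exact h1
  have h4 : i' = j₀ := (hchar₀ i').mp h3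
  -- symmetric: F y₀ i ≠ F x i, F (update x s b) i = F x i
  have h5 : F y₀ i ≠ F x i := (hchar i).mpr rfl
  have h6 : F (Function.update x s b) i = F x i := by
    by_contra hc
    exact hii ((hchar' i).mp (fun h => hc h)).symm
  have h7 : F (Function.update x s b) i ≠ F y₀ i := by
    rw [h6]; exact fun h => h5 h.symm
  have h8 : i = j₀ := (hchar₀ i).mp h7
  exact hii (h4.trans h8.symm)

lemma pair_diff (x z : ℤ → A) (s t : ℤ) (hst : s ≠ t)
    (hS : ∀ i, x i ≠ z i ↔ (i = s ∨ i = t)) (i₁ i₂ : ℤ)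
    (hsub : ∀ j, F x j ≠ F z j → j = i₁ ∨ j = i₂) :
    i₁ ≠ i₂ ∧ F x i₁ ≠ F z i₁ ∧ F x i₂ ≠ F z i₂ := by
  classical
  have hS' : ∀ i, x i ≠ z i ↔ i ∈ ({s, t} : Finset ℤ) := by
    intro i
    rw [hS i]
    simp [Finset.mem_insert, Finset.mem_singleton]
  have hcard : ({s, t} : Finset ℤ).card = 2 := Finset.card_pair hst
  have hcnt := master F r floc hF hiso x z {s, t} hS' (min s t) (max s t)
    (by
      intro i hi
      simp only [Finset.mem_insert, Finset.mem_singleton] at hi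
      rcases hi with rfl | rfl
      · exact ⟨min_le_left _ _, le_max_left _ _⟩
      · exact ⟨min_le_right _ _, le_max_right _ _⟩)
    (min_le_max)
  rw [hcard] at hcnt
  exact cnt_eq_two hcnt hsub

section Delta
variable (Δ : (ℤ → A) → ℤ → ℤ)
  (hDwin : ∀ x s, s - (r:ℤ) ≤ Δ x s ∧ Δ x s ≤ s + r)
  (hDchar : ∀ (x : ℤ → A) s b, b ≠ x s →
      ∀ j, (F (Function.update x s b) j ≠ F x j ↔ j = Δ x s))

include hDchar

lemma delta_ne [Nontrivial A] (x : ℤ → A) (s t : ℤ) (hst : s ≠ t) : Δ x s ≠ Δ x t := by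
  classical
  obtain ⟨b, hb⟩ := exists_ne (x s)
  obtain ⟨c, hc⟩ := exists_ne (x t)
  set y1 := Function.update x s b with hy1
  set y2 := Function.update x t c with hy2
  have hS : ∀ i, y1 i ≠ y2 i ↔ (i = s ∨ i = t) := by
    intro i
    rcases eq_or_ne i s with rfl | his
    · rw [hy1, hy2, Function.update_self, Function.update_of_ne hst]
      exact iff_of_true hb (Or.inl rfl)
    · rcases eq_or_ne i t with rfl | hit
      · rw [hy1, hy2, Function.update_self, Function.update_of_ne his]
        exact iff_of_true (Ne.symm hc) (Or.inr rfl)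
      · rw [hy1, hy2, Function.update_of_ne his, Function.update_of_ne hit]
        exact iff_of_false (fun h => h rfl) (by tauto)
  have hsub : ∀ j, F y1 j ≠ F y2 j → j = Δ x s ∨ j = Δ x t := by
    intro j hj
    by_contra hboth
    push_neg at hboth
    have e1 : F y1 j = F x j := by
      by_contra hcon
      exact hboth.1 ((hDchar x s b hb j).mp hcon)
    have e2 : F y2 j = F x j := by
      by_contra hcon
      exact hboth.2 ((hDchar x t c hc j).mp hcon)
    exact hj (e1.trans e2.symm)
  exact (pair_diff F r floc hF hiso y1 y2 s t hst hS _ _ hsub).1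

lemma delta_two (x : ℤ → A) (s t : ℤ) (hst : s ≠ t) (b c : A) (hb : b ≠ x s) (hc : c ≠ x t) :
    Δ x s ≠ Δ (Function.update x s b) t ∧
    (∀ j, F x j ≠ F (Function.update (Function.update x s b) t c) j →
        j = Δ x s ∨ j = Δ (Function.update x s b) t) ∧
    F x (Δ x s) ≠ F (Function.update (Function.update x s b) t c) (Δ x s) ∧
    F x (Δ (Function.update x s b) t) ≠
      F (Function.update (Function.update x s b) t c) (Δ (Function.update x s b) t) := by
  classical
  set y := Function.update x s b with hy
  set z := Function.update y t c with hz
  have hcy : c ≠ y t := by rw [hy, Function.update_of_ne (Ne.symm hst)]; exact hc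
  have hS : ∀ i, x i ≠ z i ↔ (i = s ∨ i = t) := by
    intro i
    rcases eq_or_ne i s with rfl | his
    · rw [hz, hy, Function.update_of_ne hst, Function.update_self]
      exact iff_of_true (Ne.symm hb) (Or.inl rfl)
    · rcases eq_or_ne i t with rfl | hit
      · rw [hz, Function.update_self]
        exact iff_of_true (Ne.symm hc) (Or.inr rfl)
      · rw [hz, hy, Function.update_of_ne hit, Function.update_of_ne his]
        exact iff_of_false (fun h => h rfl) (by tauto)
  have hsub : ∀ j, F x j ≠ F z j → j = Δ x s ∨ j = Δ y t := by
    intro j hj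
    by_contra hboth
    push_neg at hboth
    have e1 : F y j = F x j := by
      by_contra hcon
      exact hboth.1 ((hDchar x s b hb j).mp hcon)
    have e2 : F z j = F y j := by
      by_contra hcon
      exact hboth.2 ((hDchar y t c hcy j).mp hcon)
    exact hj ((e2.trans e1).symm)
  obtain ⟨h1, h2, h3⟩ := pair_diff F r floc hF hiso x z s t hst hS _ _ hsub
  exact ⟨h1, hsub, h2, h3⟩

lemma delta_upd [Nontrivial A] (x : ℤ → A) (s t : ℤ) (c : A) (hst : s ≠ t) :
    Δ (Function.update x t c) s = Δ x s := by
  classical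
  rcases eq_or_ne c (x t) with rfl | hc
  · rw [Function.update_eq_self]
  · obtain ⟨b, hb⟩ := exists_ne (x s)
    have h1 := delta_two F r floc hF hiso Δ hDchar x s t hst b c hb hc
    have h2 := delta_two F r floc hF hiso Δ hDchar x t s (Ne.symm hst) c b hc hb
    have hcomm : Function.update (Function.update x t c) s b
        = Function.update (Function.update x s b) t c :=
      Function.update_comm (Ne.symm hst) c b x
    have hincl := h2.2.1
    rw [hcomm] at hincl
    rcases hincl _ h1.2.2.1 with h | h
    · exact absurd h (delta_ne F r floc hF hiso Δ hDchar x s t hst)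
    · exact h.symm

lemma delta_upd_self (x : ℤ → A) (s : ℤ) (c : A) :
    Δ (Function.update x s c) s = Δ x s := by
  classical
  rcases eq_or_ne c (x s) with rfl | hc
  · rw [Function.update_eq_self]
  · set x1 := Function.update x s c with hx1
    have hA := hDchar x s c hc
    have hcs : x s ≠ x1 s := by rw [hx1, Function.update_self]; exact Ne.symm hc
    have hB := hDchar x1 s (x s) hcs
    have hxx : Function.update x1 s (x s) = x := by
      rw [hx1, Function.update_idem, Function.update_eq_self]
    rw [hxx] at hB
    have hne1 : F x1 (Δ x s) ≠ F x (Δ x s) := (hA _).mpr rfl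
    exact ((hB _).mp (Ne.symm hne1)).symm

lemma delta_chain [Nontrivial A] (S : Finset ℤ) :
    ∀ (x x' : ℤ → A) (s : ℤ), s ∉ S → (∀ u ∉ S, x u = x' u) → Δ x s = Δ x' s := by
  classical
  induction S using Finset.induction_on with
  | empty =>
    intro x x' s _ h
    have : x = x' := funext fun u => h u (Finset.notMem_empty u)
    rw [this]
  | @insert t S' htS' ih =>
    intro x x' s hs hagree
    have hst : s ≠ t := fun h => hs (h ▸ Finset.mem_insert_self t S')
    have e1 : Δ x s = Δ (Function.update x t (x' t)) s :=
      (delta_upd F r floc hF hiso Δ hDchar x s t (x' t) hst).symm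
    have e2 : Δ (Function.update x t (x' t)) s = Δ x' s := by
      apply ih
      · exact fun h => hs (Finset.mem_insert_of_mem h)
      · intro u hu
        rcases eq_or_ne u t with rfl | hut
        · rw [Function.update_self]
        · rw [Function.update_of_ne hut]
          exact hagree u (by simp only [Finset.mem_insert]; tauto)
    rw [e1, e2]

include hDwin

lemma delta_local [Nontrivial A] (x x' : ℤ → A) (s : ℤ)
    (h : ∀ u, s - 2*(r:ℤ) ≤ u → u ≤ s + 2*r → x u = x' u) : Δ x s = Δ x' s := by
  classical
  obtain ⟨b, hb⟩ := exists_ne (x s)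
  have hxs : x s = x' s := h s (by omega) (by omega)
  have hb' : b ≠ x' s := by rw [← hxs]; exact hb
  have key : ∀ j, F (Function.update x' s b) j ≠ F x' j ↔ j = Δ x s := by
    intro j
    by_cases hj : s - (r:ℤ) ≤ j ∧ j ≤ s + r
    · have e1 : F (Function.update x' s b) j = F (Function.update x s b) j := by
        apply F_local F r floc hF
        intro u hu1 hu2
        rcases eq_or_ne u s with rfl | hus
        · rw [Function.update_self, Function.update_self]
        · rw [Function.update_of_ne hus, Function.update_of_ne hus]
          exact (h u (by omega) (by omega)).symm
      have e2 : F x' j = F x j := by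
        apply F_local F r floc hF
        intro u hu1 hu2
        exact (h u (by omega) (by omega)).symm
      rw [e1, e2]
      exact hDchar x s b hb j
    · constructor
      · intro hcon
        exfalso
        apply hcon
        apply F_eq_outside F r floc hF ({s} : Finset ℤ) ?_ j ?_
        · intro i
          rcases eq_or_ne i s with rfl | his
          · rw [Function.update_self]
            simp only [Finset.mem_singleton]
            exact iff_of_true hb' trivial
          · rw [Function.update_of_ne his]
            simp only [Finset.mem_singleton]
            exact iff_of_false (fun hcc => hcc rfl) his
        · intro i hi
          simp only [Finset.mem_singleton] at hi
          subst hi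
          omega
      · rintro rfl
        exfalso
        have := hDwin x s
        omega
  have hchar' := hDchar x' s b hb'
  have := (key (Δ x s)).mpr rfl
  exact (hchar' (Δ x s)).mp this

lemma delta_const [Nontrivial A] (x x' : ℤ → A) (s : ℤ) : Δ x s = Δ x' s := by
  classical
  set x₀ : ℤ → A := fun u =>
    if s - 2*(r:ℤ) ≤ u ∧ u ≤ s + 2*r ∧ u ≠ s then x' u else x u with hx₀
  have h1 : Δ x s = Δ x₀ s := by
    apply delta_chain F r floc hF hiso Δ hDchar ((Finset.Icc (s - 2*(r:ℤ)) (s + 2*r)).erase s)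
    · exact Finset.notMem_erase s _
    · intro u hu
      rw [hx₀]
      simp only
      rw [if_neg]
      intro hcond
      apply hu
      rw [Finset.mem_erase, Finset.mem_Icc]
      exact ⟨hcond.2.2, hcond.1, hcond.2.1⟩
  have h2 : Δ x₀ s = Δ (Function.update x₀ s (x' s)) s :=
    (delta_upd_self F r floc hF hiso Δ hDchar x₀ s (x' s)).symm
  have h3 : Δ (Function.update x₀ s (x' s)) s = Δ x' s := by
    apply delta_local F r floc hF hiso Δ hDwin hDchar
    intro u hu1 hu2
    rcases eq_or_ne u s with rfl | hus
    · rw [Function.update_self]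
    · rw [Function.update_of_ne hus, hx₀]
      simp only
      rw [if_pos ⟨hu1, hu2, hus⟩]
  rw [h1, h2, h3]

lemma delta_equivariant [Nontrivial A] (x : ℤ → A) (s : ℤ) :
    Δ x s = Δ (fun u => x (u + s)) 0 + s := by
  classical
  set xs : ℤ → A := fun u => x (u + s) with hxs
  obtain ⟨b, hb⟩ := exists_ne (x s)
  have hb0 : b ≠ xs 0 := by rw [hxs]; simpa using hb
  have hupd : (fun u => (Function.update x s b) (u + s)) = Function.update xs 0 b := by
    funext u
    rcases eq_or_ne u 0 with rfl | hu
    · show Function.update x s b (0 + s) = Function.update xs 0 b 0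
      rw [zero_add, Function.update_self, Function.update_self]
    · rw [Function.update_of_ne hu, Function.update_of_ne (by omega : u + s ≠ s), hxs]
  have char1 := hDchar xs 0 b hb0
  have key : ∀ j, F (Function.update x s b) (j + s) ≠ F x (j + s) ↔ j = Δ xs 0 := by
    intro j
    rw [← F_shift F r floc hF (Function.update x s b) s j, ← F_shift F r floc hF x s j,
        hupd]
    exact char1 j
  have hmem : F (Function.update x s b) ((Δ x s - s) + s) ≠ F x ((Δ x s - s) + s) := by
    rw [show Δ x s - s + s = Δ x s by ring]
    exact (hDchar x s b hb (Δ x s)).mpr rfl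
  have := (key (Δ x s - s)).mp hmem
  omega

lemma value_chain [Nontrivial A] (m : ℤ) (hDm : ∀ (z : ℤ → A) t, Δ z t = t + m) (S : Finset ℤ) :
    ∀ (z z' : ℤ → A), 0 ∉ S → (∀ u ∉ S, z u = z' u) → F z m = F z' m := by
  classical
  induction S using Finset.induction_on with
  | empty =>
    intro z z' _ h
    have : z = z' := funext fun u => h u (Finset.notMem_empty u)
    rw [this]
  | @insert t S' htS' ih =>
    intro z z' hs hagree
    have ht0 : t ≠ 0 := fun h => hs (h ▸ Finset.mem_insert_self t S')
    have e1 : F (Function.update z t (z' t)) m = F z m := by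
      rcases eq_or_ne (z t) (z' t) with he | he
      · rw [← he, Function.update_eq_self]
      · have hch := hDchar z t (z' t) (Ne.symm he) m
        have hne : ¬ (m = Δ z t) := by rw [hDm z t]; omega
        exact not_ne_iff.mp (fun hh => hne (hch.mp hh))
    have e2 : F (Function.update z t (z' t)) m = F z' m := by
      apply ih
      · exact fun h => hs (Finset.mem_insert_of_mem h)
      · intro u hu
        rcases eq_or_ne u t with rfl | hut
        · rw [Function.update_self]
        · rw [Function.update_of_ne hut]
          exact hagree u (by simp only [Finset.mem_insert]; tauto)
    rw [← e1, e2]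

lemma value_local [Nontrivial A] (m : ℤ) (hDm : ∀ (z : ℤ → A) t, Δ z t = t + m)
    (z z' : ℤ → A) (h0 : z 0 = z' 0) : F z m = F z' m := by
  classical
  set z₀ : ℤ → A := fun u =>
    if m - (r:ℤ) ≤ u ∧ u ≤ m + r ∧ u ≠ 0 then z' u else z u with hz₀
  have h1 : F z m = F z₀ m := by
    apply value_chain F r floc hF hiso Δ hDwin hDchar m hDm
      ((Finset.Icc (m - (r:ℤ)) (m + r)).erase 0)
    · exact Finset.notMem_erase 0 _
    · intro u hu
      rw [hz₀]
      simp only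
      rw [if_neg]
      intro hcond
      apply hu
      rw [Finset.mem_erase, Finset.mem_Icc]
      exact ⟨hcond.2.2, hcond.1, hcond.2.1⟩
  have h2 : F z₀ m = F z' m := by
    apply F_local F r floc hF
    intro u hu1 hu2
    rcases eq_or_ne u 0 with rfl | hu0
    · rw [hz₀]
      simp only
      rw [if_neg (by tauto)]
      exact h0
    · rw [hz₀]
      simp only
      rw [if_pos ⟨hu1, hu2, hu0⟩]
  rw [h1, h2]

end Delta
end CAComb

/-- a CA on the full shift which is a `dB`-isometry is a composition
of a power of the shift and a symbol permutation. -/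
theorem isometric_ca_is_shift_perm {A : Type*} [Fintype A]
    (F : (ℤ → A) → (ℤ → A)) (hCA : IsSlidingBlock F)
    (hiso : ∀ x y : ℤ → A, dB (F x) (F y) = dB x y) :
    ∃ (n : ℤ) (g : A → A), Function.Bijective g ∧ ∀ x i, F x i = g (x (i + n)) := by
  classical
  unfold IsSlidingBlock at hCA
  obtain ⟨r, floc, hF⟩ := hCA
  rcases subsingleton_or_nontrivial A with hsub | hnt
  · exact ⟨0, id, Function.bijective_id, fun x i => Subsingleton.elim _ _⟩
  · have hex := exists_isD F r floc hF hiso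
    choose Δ hD using hex
    have hDwin : ∀ (x : ℤ → A) s, s - (r:ℤ) ≤ Δ x s ∧ Δ x s ≤ s + r := fun x s => (hD x s).1
    have hDchar : ∀ (x : ℤ → A) s b, b ≠ x s →
        ∀ j, (F (Function.update x s b) j ≠ F x j ↔ j = Δ x s) := fun x s => (hD x s).2
    set a₀ : A := Classical.arbitrary A
    set m : ℤ := Δ (fun _ => a₀) 0 with hm0
    have hDm : ∀ (z : ℤ → A) t, Δ z t = t + m := by
      intro z t
      rw [delta_equivariant F r floc hF hiso Δ hDwin hDchar z t,
          delta_const F r floc hF hiso Δ hDwin hDchar (fun u => z (u + t)) (fun _ => a₀) 0]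
      omega
    set g : A → A := fun v => F (fun _ => v) m with hg
    have hval : ∀ z : ℤ → A, F z m = g (z 0) := fun z =>
      value_local F r floc hF hiso Δ hDwin hDchar m hDm z (fun _ => z 0) rfl
    have hinj : Function.Injective g := by
      intro u v huv
      by_contra hne
      set z : ℤ → A := fun _ => u with hz
      have h1 : F (Function.update z 0 v) m ≠ F z m := by
        apply (hDchar z 0 v (Ne.symm hne) m).mpr
        rw [hDm z 0]
        ring
      apply h1
      rw [hval (Function.update z 0 v), hval z, Function.update_self]
      exact huv.symm
    have hbij : Function.Bijective g := Finite.injective_iff_bijective.mp hinj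
    refine ⟨-m, g, hbij, ?_⟩
    intro x i
    have hsh : F (fun u => x (u + (i - m))) m = F x (m + (i - m)) :=
      F_shift F r floc hF x (i - m) m
    have hxi : F x i = F (fun u => x (u + (i - m))) m := by
      rw [hsh, show m + (i - m) = i by ring]
    rw [hxi, hval]
    show g (x (0 + (i - m))) = g (x (i + -m))
    rw [show (0 : ℤ) + (i - m) = i + -m by ring]
end

section
/- Besicovitch-isometry of cellular automata is not invariant under topological conjugacy: on the product subshift ({0,1}^ℤ)×({0,1}^ℤ) ≅ ({0,1}×{0,1})^ℤ, the coordinate-swap symbol permutation f(x,y) = (y,x) is a d_B-isometry, but its conjugate g∘f∘g^{−1} by the partial shift g = id × σ is not a d_B-isometry. -/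
open Filter

/-!
The swap acts cellwise by a bijection of the alphabet, so it preserves every Hamming distance.
Its conjugate `x ↦ (i ↦ ((x (i - 1)).2, (x (i + 1)).1))` mixes neighbouring cells. The
4-periodic point `y` with `y i = (1, 0)` for `i ≡ 0, 1` and `y i = (0, 1)` for `i ≡ 2, 3 (mod 4)`
differs from `0` everywhere, so `dB 0 y = 1`. The conjugate fixes `0` and sends `y` to a point
vanishing at every `i ≡ 1, 2 (mod 4)`; with at most one disagreement in each pair `{2k, 2k + 1}`
the two images are at distance at most `1 / 2`.
-/

section Besicovitch

variable {A B : Type*}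

theorem hamIcc_comp_of_injective {φ : A → B} (hφ : Function.Injective φ) (x y : ℤ → A)
    (a b : ℤ) : hamIcc (φ ∘ x) (φ ∘ y) a b = hamIcc x y a b := by
  unfold hamIcc
  congr 1
  ext i
  simp [hφ.ne_iff]

theorem dB_comp_of_injective {φ : A → B} (hφ : Function.Injective φ) (x y : ℤ → A) :
    dB (φ ∘ x) (φ ∘ y) = dB x y := by
  simp only [dB, hamIcc_comp_of_injective hφ]

theorem dB_eq_one_of_forall_ne {x y : ℤ → A} (h : ∀ i, x i ≠ y i) : dB x y = 1 := by
  have hham : ∀ n : ℕ, hamIcc x y (-(n : ℤ)) n = 2 * n + 1 := fun n => by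
    simp only [hamIcc, ne_eq, h, not_false_eq_true, Finset.filter_true, Int.card_Icc]
    omega
  have hratio : (fun n : ℕ => (hamIcc x y (-(n : ℤ)) n : ℝ) / (2 * n + 1)) = fun _ => 1 := by
    funext n
    rw [hham]
    push_cast
    exact div_self (by positivity)
  rw [dB, hratio, limsup_const]

theorem hamIcc_le_of_agree_in_each_pair {x y : ℤ → A}
    (h : ∀ k : ℤ, x (2 * k) = y (2 * k) ∨ x (2 * k + 1) = y (2 * k + 1)) (n : ℕ) :
    hamIcc x y (-(n : ℤ)) n ≤ n + 1 := by
  have hinj : Set.InjOn (· / 2) {i : ℤ | x i ≠ y i} := by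
    intro i hi j hj hij
    by_contra hne
    have hij : i / 2 = j / 2 := hij
    obtain ⟨hi', hj'⟩ | ⟨hi', hj'⟩ :
        (i = 2 * (i / 2) ∧ j = 2 * (i / 2) + 1) ∨ (i = 2 * (i / 2) + 1 ∧ j = 2 * (i / 2)) := by
      omega
    · rw [Set.mem_ofPred_eq, hi'] at hi
      rw [Set.mem_ofPred_eq, hj'] at hj
      exact (h _).elim hi hj
    · rw [Set.mem_ofPred_eq, hi'] at hi
      rw [Set.mem_ofPred_eq, hj'] at hj
      exact (h _).elim hj hi
  unfold hamIcc
  calc _ ≤ (Finset.Icc (-(n : ℤ) / 2) (n / 2)).card := by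
        refine Finset.card_le_card_of_injOn (· / 2) (fun i hi => ?_) (hinj.mono fun i hi => ?_)
        · simp only [Finset.coe_filter, Finset.mem_Icc, Set.mem_ofPred_eq, Finset.mem_coe] at hi ⊢
          omega
        simp only [Finset.coe_filter, Set.mem_ofPred_eq] at hi ⊢
        exact hi.2
    _ ≤ n + 1 := by rw [Int.card_Icc]; omega

theorem dB_le_half_of_agree_in_each_pair {x y : ℤ → A}
    (h : ∀ k : ℤ, x (2 * k) = y (2 * k) ∨ x (2 * k + 1) = y (2 * k + 1)) : dB x y ≤ 1 / 2 := by
  have hlim : Tendsto (fun n : ℕ => ((n : ℝ) + 1) / (2 * n + 1)) atTop (nhds (1 / 2)) := by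
    simpa [add_comm] using tendsto_add_mul_div_add_mul_atTop_nhds (1 : ℝ) 1 1 two_ne_zero
  rw [← hlim.limsup_eq, dB]
  refine limsup_le_limsup (Eventually.of_forall fun n => ?_)
    (isCoboundedUnder_le_of_le atTop fun n => by positivity) hlim.isBoundedUnder_le
  dsimp only
  gcongr
  exact_mod_cast hamIcc_le_of_agree_in_each_pair h n

end Besicovitch

/-- `dB`-isometry of CA is not a conjugacy invariant: the coordinate
swap `f` on `({0,1}×{0,1})^ℤ` is a `dB`-isometry, but its conjugate by the partial
shift `g = id × σ` is not. -/
theorem isometry_not_conjugacy_invariant :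
    let f : (ℤ → Bool × Bool) → (ℤ → Bool × Bool) := fun x i => ((x i).2, (x i).1)
    let g : (ℤ → Bool × Bool) → (ℤ → Bool × Bool) := fun x i => ((x i).1, (x (i + 1)).2)
    let ginv : (ℤ → Bool × Bool) → (ℤ → Bool × Bool) := fun x i => ((x i).1, (x (i - 1)).2)
    (g ∘ ginv = id ∧ ginv ∘ g = id) ∧
    (∀ x y : ℤ → Bool × Bool, dB (f x) (f y) = dB x y) ∧
    ¬ (∀ x y : ℤ → Bool × Bool,
        dB ((g ∘ f ∘ ginv) x) ((g ∘ f ∘ ginv) y) = dB x y) := by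
  intro f g ginv
  have hconj : ∀ x i, (g ∘ f ∘ ginv) x i = ((x (i - 1)).2, (x (i + 1)).1) := fun _ _ => rfl
  refine ⟨⟨?_, ?_⟩, fun x y => dB_comp_of_injective Prod.swap_injective x y, fun hiso => ?_⟩
  · funext x i
    simp [g, ginv]
  · funext x i
    simp [g, ginv]
  let x : ℤ → Bool × Bool := fun _ => (false, false)
  let y : ℤ → Bool × Bool := fun i => (decide (i % 4 < 2), decide (2 ≤ i % 4))
  have hxy : dB x y = 1 := dB_eq_one_of_forall_ne fun i => by
    simp [x, y]
  have himage : dB ((g ∘ f ∘ ginv) x) ((g ∘ f ∘ ginv) y) ≤ 1 / 2 :=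
    dB_le_half_of_agree_in_each_pair fun k => by
      simp only [hconj, Order.lt_two_iff, Prod.mk.injEq, false_eq_decide_iff, not_le,
        add_sub_cancel_right, x, y]
      omega
  rw [hiso, hxy] at himage
  norm_num at himage
end
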